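/- arXiv:math/9910015 — 7 statements merged into one kernel-verified Lean document; each statement's English description precedes it below -/
import Mathlib

section
/- A subset A of Cantor space 2^ω has (product) measure zero if and only if there exists a function f : ω → ω such that A ⊆ ⋂_m ⋃_{n>m} C^n_{f(n)}, where {C^n_m : n,m ∈ ω} is a fixed enumeration such that for each n, {C^n_m : m ∈ ω} lists all clopen sets of measure 2^{-n}. -/
/-!
For each `k`, a null set is covered by countably many disjoint clopen sets of total measure
at most `2⁻¹ ^ k`; interleaving these covers gives one summable sequence of clopen sets in which
every point of `A` lies infinitely often. Cutting the sequence into consecutive finite blocks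
with tails below `2⁻¹ ^ j` yields clopen sets `E j` of measure at most `2⁻¹ ^ j`. A clopen set
is a union of cylinders of some fixed length, so adding cylinders enlarges `E j` to a clopen set
of measure exactly `2⁻¹ ^ j`, which is some `C j (f j)`. Conversely, `∑ n, 2⁻¹ ^ n` is finite,
so by Borel–Cantelli the points lying in infinitely many `C n (f n)` form a null set.
-/

open MeasureTheory Set Filter Topology TopologicalSpace Function
open scoped ENNReal Finset

theorem IsOpen.exists_iUnion_isClopen {X : Type*} [TopologicalSpace X]
    [SecondCountableTopology X]
    (hB : IsTopologicalBasis {s : Set X | IsClopen s}) {U : Set X} (hU : IsOpen U) :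
    ∃ D : ℕ → Set X, (∀ i, IsClopen (D i)) ∧ Pairwise (Disjoint on D) ∧ ⋃ i, D i = U := by
  obtain ⟨T, hTc, hTB, hTU⟩ :=
    isOpen_sUnion_countable {s | IsClopen s ∧ s ⊆ U} fun s hs => hs.1.isOpen
  obtain ⟨V, hV⟩ := (hTc.insert ∅).exists_eq_range (insert_nonempty _ _)
  have hVclopen : ∀ i, IsClopen (V i) := fun i => by
    rcases (hV ▸ mem_range_self i : V i ∈ insert ∅ T) with hi | hi
    exacts [hi ▸ isClopen_empty, (hTB hi).1]
  refine ⟨disjointed V, fun i => disjointedRec (fun t j ht => ht.diff (hVclopen j)) (hVclopen i),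
    disjoint_disjointed V, ?_⟩
  rw [iUnion_disjointed, ← sUnion_range, ← hV, sUnion_insert, empty_union, hTU]
  exact (hB.open_eq_sUnion' hU).symm

theorem ENNReal.exists_finset_sum_le_frequently {u : ℕ → ℝ≥0∞} (hu : ∑' i, u i ≠ ∞)
    {ε : ℕ → ℝ≥0∞} (hε : ∀ j, 0 < ε j) :
    ∃ S : ℕ → Finset ℕ, (∀ j, ∑ i ∈ S j, u i ≤ ε j) ∧
      ∀ p : ℕ → Prop, (∃ᶠ i in atTop, p i) → ∃ᶠ j in atTop, ∃ i ∈ S j, p i := by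
  obtain ⟨φ, hφ, hφε⟩ := extraction_forall_of_eventually fun j =>
    (ENNReal.tendsto_sum_nat_add u hu).eventually (eventually_le_nhds (hε j))
  refine ⟨fun j => Finset.Ico (φ j) (φ (j + 1)), fun j => ?_, fun p hp => ?_⟩
  · calc ∑ i ∈ Finset.Ico (φ j) (φ (j + 1)), u i
        = ∑ k ∈ Finset.range (φ (j + 1) - φ j), u (k + φ j) := by
          simp only [Finset.sum_Ico_eq_sum_range, add_comm]
      _ ≤ ∑' k, u (k + φ j) := ENNReal.sum_le_tsum _
      _ ≤ ε j := hφε j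
  · rw [frequently_atTop] at hp ⊢
    intro J
    obtain ⟨i, hi, hpi⟩ := hp (φ J)
    obtain ⟨n, hn, hn'⟩ := StrictMono.exists_between_of_tendsto_atTop (t := fun n => φ (n + J))
      (fun a b hab => hφ (by omega)) (hφ.tendsto_atTop.comp (tendsto_add_atTop_nat J))
      (x := i + 1) (by simpa [Nat.lt_succ_iff] using hi)
    refine ⟨n + J, le_add_self, i, Finset.mem_Ico.2 ⟨by omega, ?_⟩, hpi⟩
    rw [add_right_comm]
    omega

section ClopenCovers

variable {X : Type*} [TopologicalSpace X] [SecondCountableTopology X] [MeasurableSpace X]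
  [OpensMeasurableSpace X] {μ : Measure X} [μ.OuterRegular] {A : Set X}

theorem MeasureTheory.exists_isClopen_cover_tsum_le
    (hB : IsTopologicalBasis {s : Set X | IsClopen s}) (hA : μ A = 0) {ε : ℝ≥0∞} (hε : 0 < ε) :
    ∃ D : ℕ → Set X, (∀ i, IsClopen (D i)) ∧ A ⊆ ⋃ i, D i ∧ ∑' i, μ (D i) ≤ ε := by
  obtain ⟨U, hAU, hU, hμU⟩ := exists_isOpen_lt_of_lt A ε (hA ▸ hε)
  obtain ⟨D, hD, hdisj, rfl⟩ := hU.exists_iUnion_isClopen hB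
  refine ⟨D, hD, hAU, ?_⟩
  rw [← measure_iUnion hdisj fun i => (hD i).isOpen.measurableSet]
  exact hμU.le

theorem MeasureTheory.exists_isClopen_frequently_mem
    (hB : IsTopologicalBasis {s : Set X | IsClopen s}) (hA : μ A = 0) :
    ∃ D : ℕ → Set X, (∀ i, IsClopen (D i)) ∧ ∑' i, μ (D i) ≠ ∞ ∧
      ∀ x ∈ A, ∃ᶠ i in atTop, x ∈ D i := by
  choose D hD hAD hDμ using fun k : ℕ =>
    exists_isClopen_cover_tsum_le hB hA (ε := 2⁻¹ ^ k)
      (ENNReal.pow_pos (ENNReal.inv_pos.2 ENNReal.ofNat_ne_top) k)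
  refine ⟨fun n : ℕ => D n.unpair.1 n.unpair.2, fun n => hD _ _, ?_, fun x hx => ?_⟩
  · have hsum : ∑' n : ℕ, μ (D n.unpair.1 n.unpair.2) = ∑' k, ∑' i, μ (D k i) := by
      rw [← ENNReal.tsum_prod, ← Nat.pairEquiv.symm.tsum_eq]
      rfl
    refine hsum ▸ ne_top_of_le_ne_top ?_ (ENNReal.tsum_le_tsum hDμ)
    simp
  · choose i hi using fun k => mem_iUnion.1 (hAD k hx)
    rw [Nat.frequently_atTop_iff_infinite]
    exact infinite_of_injective_forall_mem (f := fun k => Nat.pair k (i k))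
      (fun k l hkl => (Nat.pair_eq_pair.1 hkl).1) fun k => by simpa using hi k

theorem MeasureTheory.exists_isClopen_frequently_mem_measure_le
    (hB : IsTopologicalBasis {s : Set X | IsClopen s}) (hA : μ A = 0) {ε : ℕ → ℝ≥0∞}
    (hε : ∀ j, 0 < ε j) :
    ∃ E : ℕ → Set X, (∀ j, IsClopen (E j)) ∧ (∀ j, μ (E j) ≤ ε j) ∧
      ∀ x ∈ A, ∃ᶠ j in atTop, x ∈ E j := by
  obtain ⟨D, hD, hsum, hAD⟩ := exists_isClopen_frequently_mem hB hA
  obtain ⟨S, hS, hfreq⟩ := ENNReal.exists_finset_sum_le_frequently hsum hε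
  refine ⟨fun j => ⋃ i ∈ S j, D i, fun j => isClopen_biUnion_finset fun i _ => hD i,
    fun j => (measure_biUnion_finset_le _ _).trans (hS j), fun x hx => ?_⟩
  simpa only [mem_iUnion₂, exists_prop] using hfreq _ (hAD x hx)

end ClopenCovers

theorem PiNat.exists_cylinder_subset {E : ℕ → Type*} [∀ n, TopologicalSpace (E n)]
    [∀ n, DiscreteTopology (E n)] {D : Set (∀ n, E n)} (hc : IsCompact D) (ho : IsOpen D) :
    ∃ N, ∀ x ∈ D, cylinder x N ⊆ D := by
  have : ∀ x ∈ D, ∃ n, cylinder x n ⊆ D := fun x hx => by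
    obtain ⟨_, ⟨y, n, rfl⟩, hxy, hyD⟩ :=
      (isTopologicalBasis_cylinders E).exists_subset_of_mem_open hx ho
    exact ⟨n, (mem_cylinder_iff_eq.1 hxy) ▸ hyD⟩
  choose! n hn using this
  obtain ⟨t, htD, hDt⟩ := hc.elim_nhds_subcover (fun x => cylinder x (n x))
    fun x _ => (isOpen_cylinder E x _).mem_nhds (self_mem_cylinder x _)
  refine ⟨t.sup n, fun x hx => ?_⟩
  obtain ⟨z, hz, hxz⟩ := mem_iUnion₂.1 (hDt hx)
  calc cylinder x (t.sup n) ⊆ cylinder x (n z) := cylinder_anti _ (Finset.le_sup hz)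
    _ = cylinder z (n z) := mem_cylinder_iff_eq.1 hxz
    _ ⊆ D := hn z (htD z hz)

theorem PiNat.restrict_range_preimage_image {E : ℕ → Type*} {D : Set (∀ n, E n)} {N : ℕ}
    (hD : ∀ x ∈ D, cylinder x N ⊆ D) :
    (Finset.range N).restrict ⁻¹' ((Finset.range N).restrict '' D) = D := by
  refine Subset.antisymm (fun x ⟨y, hy, hyx⟩ => hD y hy fun i hi => ?_) (subset_preimage_image _ _)
  simpa using (congrFun hyx ⟨i, Finset.mem_range.2 hi⟩).symm

theorem ENNReal.two_pow_sub_mul_inv_two_pow {n N : ℕ} (h : n ≤ N) :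
    (2 : ℝ≥0∞) ^ (N - n) * 2⁻¹ ^ N = 2⁻¹ ^ n := by
  rw [← Nat.sub_add_cancel h, pow_add, Nat.add_sub_cancel, ← mul_assoc, ← mul_pow,
    ENNReal.mul_inv_cancel two_ne_zero ofNat_ne_top, one_pow, one_mul]

def IsCoinFlipMeasure (μ : Measure (ℕ → Bool)) : Prop :=
  ∀ (s : Finset ℕ) (σ : ℕ → Bool), μ {x | ∀ i ∈ s, x i = σ i} = (2 : ℝ≥0∞)⁻¹ ^ s.card

namespace IsCoinFlipMeasure

variable {μ : Measure (ℕ → Bool)}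

theorem isProbabilityMeasure (hμ : IsCoinFlipMeasure μ) : IsProbabilityMeasure μ :=
  ⟨by simpa using hμ ∅ fun _ => false⟩

theorem measure_restrict_preimage (hμ : IsCoinFlipMeasure μ) (s : Finset ℕ)
    (T : Finset (s → Bool)) : μ (s.restrict ⁻¹' T) = #T * 2⁻¹ ^ #s := by
  have hfiber : ∀ σ : s → Bool, μ (s.restrict ⁻¹' {σ}) = 2⁻¹ ^ #s := fun σ => by
    obtain ⟨y, rfl⟩ : ∃ y : ℕ → Bool, s.restrict y = σ :=
      ⟨fun i => if h : i ∈ s then σ ⟨i, h⟩ else false, by ext; simp⟩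
    convert hμ s y using 2
    ext x
    simp [funext_iff]
  rw [← Set.biUnion_preimage_singleton, Finset.set_biUnion_coe,
    measure_biUnion_finset (fun σ _ τ _ h => (disjoint_singleton.2 h).preimage _)
      fun σ _ => measurableSet_preimage (Finset.measurable_restrict s) (measurableSet_singleton σ)]
  simp [hfiber]

theorem exists_isClopen_superset (hμ : IsCoinFlipMeasure μ) {D : Set (ℕ → Bool)}
    (hD : IsClopen D) {n : ℕ} (hDn : μ D ≤ 2⁻¹ ^ n) :
    ∃ E, IsClopen E ∧ D ⊆ E ∧ μ E = 2⁻¹ ^ n := by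
  obtain ⟨N₀, hN₀⟩ := PiNat.exists_cylinder_subset hD.isClosed.isCompact hD.isOpen
  set N := max N₀ n
  set s := Finset.range N
  set S := (toFinite (s.restrict '' D)).toFinset
  have hDS : D = s.restrict ⁻¹' S := by
    rw [Finite.coe_toFinset, PiNat.restrict_range_preimage_image fun x hx =>
      (PiNat.cylinder_anti x (le_max_left N₀ n)).trans (hN₀ x hx)]
  have hμT : ∀ T : Finset (s → Bool), μ (s.restrict ⁻¹' T) = #T * 2⁻¹ ^ N := fun T => by
    rw [hμ.measure_restrict_preimage, Finset.card_range]
  have hscale := ENNReal.two_pow_sub_mul_inv_two_pow (le_max_right N₀ n)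
  have hS : #S ≤ 2 ^ (N - n) := by
    rw [hDS, hμT, ← hscale] at hDn
    exact_mod_cast (ENNReal.mul_le_mul_iff_left (by simp) (by simp)).1 hDn
  obtain ⟨T, hST, hT⟩ := Finset.exists_superset_card_eq hS (by
    simpa [s] using Nat.pow_le_pow_right two_pos (Nat.sub_le N n))
  refine ⟨s.restrict ⁻¹' T, (isClopen_discrete _).preimage (Finset.continuous_restrict s),
    hDS ▸ preimage_mono hST, ?_⟩
  rw [hμT, hT, Nat.cast_pow, Nat.cast_ofNat, hscale]

end IsCoinFlipMeasure

theorem null_iff_subset_interUnion_clopen_general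
    (μ : Measure (ℕ → Bool))
    (hμ : ∀ (s : Finset ℕ) (σ : ℕ → Bool),
      μ {x | ∀ i ∈ s, x i = σ i} = (2 : ℝ≥0∞)⁻¹ ^ s.card)
    (C : ℕ → ℕ → Set (ℕ → Bool))
    (hmeas : ∀ n m, μ (C n m) = (2 : ℝ≥0∞)⁻¹ ^ n)
    (hsurj : ∀ (n : ℕ) (D : Set (ℕ → Bool)), IsClopen D → μ D = (2 : ℝ≥0∞)⁻¹ ^ n →
      ∃ m, C n m = D)
    (A : Set (ℕ → Bool)) :
    μ A = 0 ↔ ∃ f : ℕ → ℕ, A ⊆ ⋂ m : ℕ, ⋃ n : ℕ, ⋃ _ : m < n, C n (f n) := by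
  have hcoin : IsCoinFlipMeasure μ := hμ
  have := hcoin.isProbabilityMeasure
  constructor
  · intro hA
    obtain ⟨E, hE, hμE, hAE⟩ := exists_isClopen_frequently_mem_measure_le
      isTopologicalBasis_isClopen hA (ε := fun n => 2⁻¹ ^ n)
      fun n => ENNReal.pow_pos (ENNReal.inv_pos.2 ENNReal.ofNat_ne_top) n
    have hEC : ∀ n, ∃ m, E n ⊆ C n m := fun n => by
      obtain ⟨F, hF, hEF, hμF⟩ := hcoin.exists_isClopen_superset (hE n) (hμE n)
      obtain ⟨m, rfl⟩ := hsurj n F hF hμF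
      exact ⟨m, hEF⟩
    choose f hf using hEC
    refine ⟨f, fun x hx => mem_iInter.2 fun m => ?_⟩
    obtain ⟨n, hmn, hxn⟩ := frequently_atTop'.1 (hAE x hx) m
    exact mem_iUnion₂.2 ⟨n, hmn, hf n hxn⟩
  · rintro ⟨f, hf⟩
    refine measure_mono_null (hf.trans ?_)
      (measure_limsup_atTop_eq_zero (s := fun n => C n (f n)) ?_)
    · rw [limsup_eq_iInf_iSup_of_nat]
      exact iInter_mono fun m => iUnion₂_mono' fun n hmn => ⟨n, hmn.le, subset_rfl⟩
    · simp [hmeas]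

/-- Characterization of null subsets of Cantor space `2^ω` (with the coin-flipping
product measure `μ`, characterized by its values on cylinders): `A` has measure zero
iff there is `f : ω → ω` with `A ⊆ ⋂_m ⋃_{n>m} C^n_{f(n)}`, where for each `n`,
`{C^n_m : m ∈ ω}` enumerates all clopen sets of measure `2^{-n}`. -/
theorem null_iff_subset_interUnion_clopen
    (μ : Measure (ℕ → Bool))
    (hμ : ∀ (s : Finset ℕ) (σ : ℕ → Bool),
      μ {x | ∀ i ∈ s, x i = σ i} = (2 : ℝ≥0∞)⁻¹ ^ s.card)
    (C : ℕ → ℕ → Set (ℕ → Bool))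
    (hclopen : ∀ n m, IsClopen (C n m))
    (hmeas : ∀ n m, μ (C n m) = (2 : ℝ≥0∞)⁻¹ ^ n)
    (hsurj : ∀ (n : ℕ) (D : Set (ℕ → Bool)), IsClopen D → μ D = (2 : ℝ≥0∞)⁻¹ ^ n →
      ∃ m, C n m = D)
    (A : Set (ℕ → Bool)) :
    μ A = 0 ↔ ∃ f : ℕ → ℕ, A ⊆ ⋂ m : ℕ, ⋃ n : ℕ, ⋃ _ : m < n, C n (f n) :=
  null_iff_subset_interUnion_clopen_general μ hμ C hmeas hsurj A
end

section
/- Let {U_n : n ∈ ω} be a countable basis of nonempty open sets for 2^ω and let S = {S^n_m : n,m ∈ ω} be a family of clopen sets such that (i) S^n_m ∩ U_n ≠ ∅ for all m, and (ii) for every open dense set U ⊆ 2^ω and every n there is m with S^n_m ⊆ U. Then a set A ⊆ 2^ω is meager if and only if there exists f : ω → ω with A ⊆ 2^ω \ ⋂_m ⋃_{n>m} S^n_{f(n)}. -/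
open Set Filter Topology

/-- Cantor space has no isolated points: every open set containing `x`
contains another point. -/
lemma cantor_exists_ne_mem {W : Set (ℕ → Bool)} (hW : IsOpen W) {x : ℕ → Bool}
    (hx : x ∈ W) : ∃ y ∈ W, y ≠ x := by
  set y : ℕ → (ℕ → Bool) := fun k => Function.update x k (!(x k)) with hy
  have htend : Filter.Tendsto y Filter.atTop (𝓝 x) := by
    rw [tendsto_pi_nhds]
    intro i
    refine Filter.Tendsto.congr' ?_ tendsto_const_nhds
    filter_upwards [Filter.eventually_gt_atTop i] with k hk
    simp [hy, Function.update_of_ne (Nat.ne_of_lt hk)]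
  have := htend.eventually (hW.mem_nhds hx)
  rcases this.exists with ⟨k, hk⟩
  refine ⟨y k, hk, ?_⟩
  intro h
  have : y k k = x k := by rw [h]
  simp [hy] at this

/-- From a countable basis of nonempty open sets, every nonempty open set contains
some basic set with index outside any given finite set. -/
lemma exists_basic_index_notin
    (U : ℕ → Set (ℕ → Bool))
    (hU : TopologicalSpace.IsTopologicalBasis (Set.range U)) :
    ∀ (k : ℕ) (t : Finset ℕ), t.card ≤ k → ∀ V : Set (ℕ → Bool), IsOpen V →
      V.Nonempty → ∃ n, n ∉ t ∧ U n ⊆ V := by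
  intro k
  induction k with
  | zero =>
    intro t ht V hV ⟨x, hx⟩
    rcases hU.exists_subset_of_mem_open hx hV with ⟨_, ⟨n, rfl⟩, _, hsub⟩
    exact ⟨n, by simp [Finset.card_eq_zero.mp (Nat.le_zero.mp ht)], hsub⟩
  | succ k ih =>
    intro t ht V hV ⟨x, hx⟩
    rcases hU.exists_subset_of_mem_open hx hV with ⟨_, ⟨n0, rfl⟩, hxn0, hsub⟩
    by_cases hn0 : n0 ∈ t
    · rcases cantor_exists_ne_mem (hU.isOpen ⟨n0, rfl⟩) hxn0 with ⟨z, hzU, hzx⟩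
      have hV' : IsOpen (V \ {x}) := hV.sdiff isClosed_singleton
      have hne' : (V \ {x}).Nonempty := ⟨z, hsub hzU, by simpa using hzx⟩
      have hcard : (t.erase n0).card ≤ k := by
        have := Finset.card_erase_of_mem hn0
        omega
      rcases ih (t.erase n0) hcard _ hV' hne' with ⟨n, hnt, hnsub⟩
      have hne : n ≠ n0 := by
        rintro rfl
        exact (hnsub hxn0).2 rfl
      exact ⟨n, fun h => hnt (Finset.mem_erase.mpr ⟨hne, h⟩),
        hnsub.trans diff_subset⟩
    · exact ⟨n0, hn0, hsub⟩

/-- Let `{U n}` be a countable basis of nonempty open sets for Cantor space `2^ω`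
and `S` a good family of clopen sets: every `S n m` meets `U n`, and for every open
dense `V` and every `n` some `S n m` is contained in `V`. Then `A ⊆ 2^ω` is meager
iff there is `f : ω → ω` with `A ⊆ 2^ω \ ⋂_m ⋃_{n>m} S^n_{f(n)}`. -/
theorem meager_iff_good_family
    (U : ℕ → Set (ℕ → Bool))
    (hU : TopologicalSpace.IsTopologicalBasis (Set.range U))
    (hUne : ∀ n, (U n).Nonempty)
    (S : ℕ → ℕ → Set (ℕ → Bool))
    (hclopen : ∀ n m, IsClopen (S n m))
    (hgood1 : ∀ n m, (S n m ∩ U n).Nonempty)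
    (hgood2 : ∀ V : Set (ℕ → Bool), IsOpen V → Dense V → ∀ n, ∃ m, S n m ⊆ V)
    (A : Set (ℕ → Bool)) :
    IsMeagre A ↔ ∃ f : ℕ → ℕ, A ⊆ (⋂ m : ℕ, ⋃ n : ℕ, ⋃ _ : m < n, S n (f n))ᶜ := by
  constructor
  · intro hA
    rw [IsMeagre, mem_residual_iff] at hA
    obtain ⟨S0, hopen, hdense, hcount, hsub⟩ := hA
    obtain ⟨V, hVeq⟩ := ((Set.countable_insert (a := Set.univ)).mpr hcount).exists_eq_range
      (Set.insert_nonempty _ _)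
    have hVopen : ∀ n, IsOpen (V n) := by
      intro n
      have : V n ∈ insert Set.univ S0 := hVeq ▸ Set.mem_range_self n
      rcases this with h | h
      · rw [h]; exact isOpen_univ
      · exact hopen _ h
    have hVdense : ∀ n, Dense (V n) := by
      intro n
      have : V n ∈ insert Set.univ S0 := hVeq ▸ Set.mem_range_self n
      rcases this with h | h
      · rw [h]; exact dense_univ
      · exact hdense _ h
    have hVsub : (⋂ n, V n) ⊆ Aᶜ := by
      have h1 : ⋂₀ (insert Set.univ S0) ⊆ Aᶜ :=
        (Set.sInter_subset_sInter (Set.subset_insert _ _)).trans hsub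
      rwa [hVeq, Set.sInter_range] at h1
    -- decreasing intersections
    set W : ℕ → Set (ℕ → Bool) := fun m => ⋂ i ∈ Finset.range (m + 1), V i with hW
    have hWopen : ∀ m, IsOpen (W m) := fun m =>
      isOpen_biInter_finset fun i _ => hVopen i
    have hWdense : ∀ m, Dense (W m) := by
      intro m
      induction m with
      | zero => simpa [hW] using hVdense 0
      | succ m ih =>
        have : W (m + 1) = V (m + 1) ∩ W m := by
          show (⋂ i ∈ Finset.range (m + 1 + 1), V i) = _
          rw [Finset.range_add_one, Finset.set_biInter_insert]
        rw [this]
        exact (hVdense (m + 1)).inter_of_isOpen_left ih (hVopen (m + 1))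
    have hWmono : ∀ {k n : ℕ}, k ≤ n → W n ⊆ W k := by
      intro k n hkn
      exact Set.biInter_subset_biInter_left (fun i hi =>
        Finset.mem_range.mpr (lt_of_lt_of_le (Finset.mem_range.mp hi) (by omega)))
    choose f hf using fun n => hgood2 (W n) (hWopen n) (hWdense n) n
    refine ⟨f, fun x hxA hxI => ?_⟩
    have : x ∈ ⋂ n, V n := by
      refine Set.mem_iInter.mpr fun k => ?_
      have hxk := Set.mem_iInter.mp hxI k
      simp only [Set.mem_iUnion] at hxk
      obtain ⟨n, hkn, hxS⟩ := hxk
      have : x ∈ W n := hf n hxS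
      have : x ∈ W k := hWmono (le_of_lt hkn) this
      exact Set.mem_iInter.mp (Set.mem_iInter.mp this k) (Finset.mem_range.mpr (by omega))
    exact hVsub this hxA
  · rintro ⟨f, hfsub⟩
    have hB : ∀ m : ℕ, IsOpen (⋃ n : ℕ, ⋃ _ : m < n, S n (f n)) ∧
        Dense (⋃ n : ℕ, ⋃ _ : m < n, S n (f n)) := by
      intro m
      constructor
      · exact isOpen_iUnion fun n => isOpen_iUnion fun _ => (hclopen n (f n)).2
      · rw [dense_iff_inter_open]
        intro V hV hVne
        obtain ⟨n, hn, hUn⟩ := exists_basic_index_notin U hU (m + 1)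
          (Finset.range (m + 1)) (by simp) V hV hVne
        have hmn : m < n := by
          by_contra h
          exact hn (Finset.mem_range.mpr (by omega))
        obtain ⟨x, hxS, hxU⟩ := hgood1 n (f n)
        exact ⟨x, hUn hxU, Set.mem_iUnion.mpr ⟨n, Set.mem_iUnion.mpr ⟨hmn, hxS⟩⟩⟩
    have : IsMeagre (⋂ m : ℕ, ⋃ n : ℕ, ⋃ _ : m < n, S n (f n))ᶜ := by
      rw [Set.compl_iInter]
      refine isMeagre_iUnion fun m => ?_
      rw [IsMeagre, compl_compl]
      exact residual_of_dense_open (hB m).1 (hB m).2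
    exact this.mono hfsub
end

section
/- Let T be a subtree of 2^{<ω} and for n ∈ ω let T↾n = T ∩ 2^n. Fix n* ∈ ω and ε = 2^{-n*}. Among all clopen sets of the form C = ⋃_{s∈F}[s] with F ⊆ 2^n, |F| = 2^{n-n*} (i.e., the sets C^{n*}_k supported on coordinates below n), the proportion of those disjoint from all branches through T↾n, relative to all such sets, is at most C(2^n − m, 2^{n-n*}) / C(2^n, 2^{n-n*}) where m = |T↾n|; consequently this ratio is at most a·e^{−ε·m} for some constant a ≥ 1 independent of n and m. -/
/-!
A code `F` of size `k` avoiding the `m` nodes of `T↾n` is a `k`-subset of the complement of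
`T↾n`, which gives the binomial count. Removing the `m` nodes one at a time multiplies the count
by `1 - k / (N - m + j)`, `N = 2^n`; while the count is nonzero each of these factors lies in
`[0, 1 - k / N]`, and `1 - x ≤ e^{-x}` with `k / N = 2^{-n*}` gives the bound with `a = 1`.
-/

open scoped Classical

open Finset

theorem Finset.card_filter_card_eq_and_disjoint {α : Type*} [Fintype α] [DecidableEq α]
    (T : Finset α) (k : ℕ) :
    (univ.filter fun F : Finset α => F.card = k ∧ Disjoint F T).card
      = (Fintype.card α - T.card).choose k := by
  have h : (univ.filter fun F : Finset α => F.card = k ∧ Disjoint F T) = powersetCard k Tᶜ := by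
    ext F
    simp only [mem_filter, mem_univ, true_and, mem_powersetCard, le_compl_iff_disjoint_right,
      and_comm]
  rw [h, card_powersetCard, card_compl]

namespace Nat

theorem cast_choose_eq_cast_choose_succ_mul (M k : ℕ) :
    (M.choose k : ℝ) = ((M + 1).choose k : ℝ) * (1 - k / (M + 1)) := by
  rcases le_or_gt k (M + 1) with hk | hk
  · have h := congrArg (fun x : ℕ => (x : ℝ)) (choose_mul_succ_eq M k)
    push_cast [cast_sub hk] at h
    field_simp
    linarith
  · rw [choose_eq_zero_of_lt (by omega), choose_eq_zero_of_lt hk]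
    simp

theorem cast_choose_eq_cast_choose_add_mul_prod (M k m : ℕ) :
    (M.choose k : ℝ) = ((M + m).choose k : ℝ) * ∏ j ∈ Icc 1 m, (1 - k / ((M : ℝ) + j)) := by
  induction m with
  | zero => simp
  | succ m ih =>
    rw [prod_Icc_succ_top (by omega), ih, cast_choose_eq_cast_choose_succ_mul (M + m), ← add_assoc]
    push_cast
    ring

theorem cast_choose_sub_div_cast_choose_eq_prod {N k m : ℕ} (hm : m ≤ N) (hk : k ≤ N) :
    ((N - m).choose k : ℝ) / N.choose k = ∏ j ∈ Icc 1 m, (1 - k / ((N : ℝ) - m + j)) := by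
  have hpos : (0 : ℝ) < N.choose k := mod_cast choose_pos hk
  rw [div_eq_iff hpos.ne', cast_choose_eq_cast_choose_add_mul_prod (N - m) k m,
    Nat.sub_add_cancel hm, cast_sub hm, mul_comm]

theorem cast_choose_sub_div_cast_choose_le_exp {N k m : ℕ} (hm : m ≤ N) :
    ((N - m).choose k : ℝ) / N.choose k ≤ Real.exp (-(k / N) * m) := by
  rcases lt_or_ge (N - m) k with hlt | hle
  · rw [choose_eq_zero_of_lt hlt, cast_zero, zero_div]
    positivity
  have hkN : (k : ℝ) ≤ N := mod_cast (by omega)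
  have factor_mem (j : ℕ) (hj : j ∈ Icc 1 m) :
      0 ≤ 1 - k / ((N : ℝ) - m + j) ∧ 1 - k / ((N : ℝ) - m + j) ≤ 1 - k / N := by
    rw [mem_Icc] at hj
    have hcast : (N : ℝ) - m + j = ((N - m + j : ℕ) : ℝ) := by push_cast [cast_sub hm]; rfl
    have hjpos : (0 : ℝ) < (N : ℝ) - m + j := by rw [hcast]; exact_mod_cast (by omega)
    have hkj : (k : ℝ) ≤ (N : ℝ) - m + j := by rw [hcast]; exact_mod_cast (by omega)
    have hjN : (N : ℝ) - m + j ≤ N := by rw [hcast]; exact_mod_cast (by omega)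
    refine ⟨sub_nonneg.mpr (div_le_one_of_le₀ hkj hjpos.le), ?_⟩
    gcongr
  calc ((N - m).choose k : ℝ) / N.choose k
      = ∏ j ∈ Icc 1 m, (1 - k / ((N : ℝ) - m + j)) :=
        cast_choose_sub_div_cast_choose_eq_prod hm (by omega)
    _ ≤ ∏ _j ∈ Icc 1 m, (1 - k / (N : ℝ)) :=
        prod_le_prod (fun j hj => (factor_mem j hj).1) (fun j hj => (factor_mem j hj).2)
    _ ≤ Real.exp (-(k / N)) ^ m := by
        rw [prod_const, card_Icc, Nat.add_sub_cancel]
        gcongr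
        · rw [sub_nonneg]; exact div_le_one_of_le₀ hkN (cast_nonneg N)
        · exact Real.one_sub_le_exp_neg _
    _ = Real.exp (-(k / N) * m) := by rw [← Real.exp_nat_mul, mul_comm]

end Nat

theorem pow_sub_div_pow {K : Type*} [Field K] {a : K} (ha : a ≠ 0) {n l : ℕ} (h : l ≤ n) :
    a ^ (n - l) / a ^ n = a⁻¹ ^ l := by
  rw [pow_sub₀ _ ha h, mul_div_right_comm, div_self (pow_ne_zero _ ha), one_mul, inv_pow]

/-- Fix `n* ∈ ω` and `ε = 2^{-n*}`. For `n ≥ n*` and a set `T↾n` of `m ≤ 2^n` nodes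
of length `n`: among the sets of `2^{n-n*}` nodes of length `n` (codes of the clopen
sets `C^{n*}_k` supported below `n`), the number of those disjoint from `T↾n` is
`C(2^n − m, 2^{n−n*})`; the corresponding proportion `C(2^n−m,2^{n−n*})/C(2^n,2^{n−n*})`
equals `∏_{j=1}^m (1 − 2^{n−n*}/(2^n − m + j))`, and is at most `a·e^{−ε·m}` for a
constant `a ≥ 1` independent of `n` and `m`. -/
theorem clopen_avoiding_tree_estimate (nstar : ℕ) :
    ∃ a : ℝ, 1 ≤ a ∧ ∀ n m : ℕ, nstar ≤ n → m ≤ 2 ^ n →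
      (∀ T : Finset (Fin n → Bool), T.card = m →
        (Finset.univ.filter fun F : Finset (Fin n → Bool) =>
            F.card = 2 ^ (n - nstar) ∧ Disjoint F T).card
          = Nat.choose (2 ^ n - m) (2 ^ (n - nstar))) ∧
      ((Nat.choose (2 ^ n - m) (2 ^ (n - nstar)) : ℝ) /
          (Nat.choose (2 ^ n) (2 ^ (n - nstar)) : ℝ)
        = ∏ j ∈ Finset.Icc 1 m,
            (1 - (2 : ℝ) ^ (n - nstar) / ((2 : ℝ) ^ n - (m : ℝ) + (j : ℝ)))) ∧
      (Nat.choose (2 ^ n - m) (2 ^ (n - nstar)) : ℝ) /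
          (Nat.choose (2 ^ n) (2 ^ (n - nstar)) : ℝ)
        ≤ a * Real.exp (-((2 : ℝ)⁻¹ ^ nstar) * (m : ℝ)) := by
  refine ⟨1, le_rfl, fun n m hn hm => ⟨fun T hT => ?_, ?_, ?_⟩⟩
  · rw [card_filter_card_eq_and_disjoint, hT]
    simp
  · have hk : 2 ^ (n - nstar) ≤ 2 ^ n := Nat.pow_le_pow_right two_pos (by omega)
    simpa using Nat.cast_choose_sub_div_cast_choose_eq_prod hm hk
  · have h := Nat.cast_choose_sub_div_cast_choose_le_exp (k := 2 ^ (n - nstar)) hm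
    push_cast at h
    rwa [one_mul, ← pow_sub_div_pow two_ne_zero hn]
end

section
/- add(M) = min{b, cov(M)}. -/
open Cardinal

/-- `add(M)`: the least cardinality of a family of meager subsets of the real line
whose union is not meager. -/
noncomputable def addMeager : Cardinal :=
  sInf {c | ∃ 𝒜 : Set (Set ℝ), (∀ A ∈ 𝒜, IsMeagre A) ∧ ¬ IsMeagre (⋃₀ 𝒜) ∧ #𝒜 = c}

/-- `cov(M)`: the least cardinality of a family of meager subsets of the real line
covering the real line. -/
noncomputable def covMeager : Cardinal :=
  sInf {c | ∃ 𝒜 : Set (Set ℝ), (∀ A ∈ 𝒜, IsMeagre A) ∧ ⋃₀ 𝒜 = Set.univ ∧ #𝒜 = c}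

/-- `𝔟`: the least cardinality of a family of functions `ω → ω` unbounded in the
eventual domination order `≤*`. -/
noncomputable def unboundingNumber : Cardinal :=
  sInf {c | ∃ F : Set (ℕ → ℕ), #F = c ∧
    ∀ g : ℕ → ℕ, ∃ f ∈ F, ¬ (∀ᶠ n in Filter.atTop, f n ≤ g n)}

/-!
Everything is transferred to Cantor space `ℕ → Fin 2` along the binary expansions
`x ↦ k + ofDigits x`, `k : ℤ`. These are continuous, cover `ℝ`, and every cylinder contains the
full preimage of an open dyadic interval, so meagre sets pass back and forth in both directions.

`add(M) ≤ cov(M)` is immediate. For `add(M) ≤ 𝔟`, the sequences with a `1` in every window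
`[n, n + max_{k ≤ n} f k]` form a nowhere dense set `boundedGaps f`; given an unbounded `F` and
countably many nowhere dense sets, some `f ∈ F` escapes all their (uniform) escape lengths
infinitely often, which lets one build a point of `boundedGaps f` outside all of them.

For `min(𝔟, cov(M)) ≤ add(M)`, write each of fewer than `𝔟` meagre sets as an increasing union
of nowhere dense sets `V i k`. A single `g₁` dominates all escape lengths, giving levels `ℓ m`
and schemes `σ i m` that extend prefixes of length `ℓ m` to length `ℓ (m + 1)` while leaving
`V i (ℓ m)`. Fewer than `cov(M)` sequences of schemes all agree infinitely often with one `G`,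
and a second dominating `g₂` groups the levels into blocks each containing such an agreement.
Hence every `V i k` lies in the countable union over `N` of the nowhere dense sets of points
that, on every block beyond `N`, somewhere fail to follow `G`.
-/

open Set Filter Topology PiNat Real

section Transfer

variable {X Y : Type*} [TopologicalSpace X] [TopologicalSpace Y]

/-- For a closed surjection this says that `f` is irreducible: no proper closed subset of `X` maps
onto `Y`. -/
def HasOpenSmallImages (f : X → Y) : Prop :=
  ∀ U, IsOpen U → U.Nonempty → ∃ W, IsOpen W ∧ W.Nonempty ∧ W ⊆ range f ∧ f ⁻¹' W ⊆ U

lemma HasOpenSmallImages.homeomorph_comp {Z : Type*} [TopologicalSpace Z] {f : X → Y}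
    (hf : HasOpenSmallImages f) (h : Y ≃ₜ Z) : HasOpenSmallImages (h ∘ f) := by
  intro U hU hne
  obtain ⟨W, hWo, hWne, hWf, hWU⟩ := hf U hU hne
  refine ⟨h '' W, h.isOpenMap W hWo, hWne.image h, ?_, ?_⟩
  · rw [range_comp]; exact image_mono hWf
  · rwa [preimage_comp, h.preimage_image]

lemma IsNowhereDense.preimage_of_hasOpenSmallImages {f : X → Y} (hc : Continuous f)
    (hf : HasOpenSmallImages f) {s : Set Y} (hs : IsNowhereDense s) :
    IsNowhereDense (f ⁻¹' s) := by
  by_contra hne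
  obtain ⟨W, hWo, ⟨w, hw⟩, hWf, hWU⟩ := hf _ isOpen_interior (nonempty_iff_ne_empty.2 hne)
  have hWs : W ⊆ closure s := fun w hw => by
    obtain ⟨z, rfl⟩ := hWf hw
    exact hc.closure_preimage_subset s (interior_subset (hWU hw))
  have := interior_maximal hWs hWo hw
  rwa [hs] at this

lemma IsMeagre.preimage_of_hasOpenSmallImages {f : X → Y} (hc : Continuous f)
    (hf : HasOpenSmallImages f) {s : Set Y} (hs : IsMeagre s) : IsMeagre (f ⁻¹' s) := by
  rw [isMeagre_iff_countable_union_isNowhereDense] at hs ⊢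
  obtain ⟨S, hnd, hcount, hsub⟩ := hs
  refine ⟨preimage f '' S, ?_, hcount.image _, ?_⟩
  · rintro _ ⟨t, ht, rfl⟩
    exact (hnd t ht).preimage_of_hasOpenSmallImages hc hf
  · rw [sUnion_image, ← preimage_iUnion₂, ← sUnion_eq_biUnion]
    exact preimage_mono hsub

lemma IsNowhereDense.image_of_hasOpenSmallImages [CompactSpace X] [T2Space Y] {f : X → Y}
    (hc : Continuous f) (hf : HasOpenSmallImages f) {s : Set X} (hs : IsNowhereDense s) :
    IsNowhereDense (f '' s) := by
  set K := closure s
  have hK : interior K = ∅ := hs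
  have hsub : interior (closure (f '' s)) ⊆ f '' K := interior_subset.trans <|
    closure_minimal (image_mono subset_closure) (hc.isClosedMap _ isClosed_closure)
  by_contra hne
  obtain ⟨y, hy⟩ := nonempty_iff_ne_empty.2 hne
  set V := interior (closure (f '' s))
  have hU : (f ⁻¹' V \ K).Nonempty := by
    obtain ⟨x, -, rfl⟩ := hsub hy
    by_contra hempty
    rw [not_nonempty_iff_eq_empty, sdiff_eq_empty] at hempty
    have := interior_maximal hempty (isOpen_interior.preimage hc) (show x ∈ f ⁻¹' V from hy)
    rwa [hK] at this
  obtain ⟨W, -, ⟨w, hw⟩, hWf, hWU⟩ :=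
    hf _ ((isOpen_interior.preimage hc).sdiff isClosed_closure) hU
  obtain ⟨z, rfl⟩ := hWf hw
  obtain ⟨k, hk, hkz⟩ := hsub (hWU hw).1
  exact (hWU (show k ∈ f ⁻¹' W by rwa [mem_preimage, hkz])).2 hk

lemma IsMeagre.image_of_hasOpenSmallImages [CompactSpace X] [T2Space Y] {f : X → Y}
    (hc : Continuous f) (hf : HasOpenSmallImages f) {s : Set X} (hs : IsMeagre s) :
    IsMeagre (f '' s) := by
  rw [isMeagre_iff_countable_union_isNowhereDense] at hs ⊢
  obtain ⟨S, hnd, hcount, hsub⟩ := hs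
  refine ⟨image f '' S, ?_, hcount.image _, ?_⟩
  · rintro _ ⟨t, ht, rfl⟩
    exact (hnd t ht).image_of_hasOpenSmallImages hc hf
  · rw [← image_sUnion]
    exact image_mono hsub

end Transfer

section Cylinders

variable {E : ℕ → Type*} [∀ n, TopologicalSpace (E n)] [∀ n, DiscreteTopology (E n)]

lemma exists_cylinder_subset_of_mem_nhds {x : ∀ n, E n} {U : Set (∀ n, E n)}
    (hU : U ∈ 𝓝 x) : ∃ m, cylinder x m ⊆ U := by
  obtain ⟨_, ⟨z, m, rfl⟩, hxz, hsub⟩ := (isTopologicalBasis_cylinders E).mem_nhds_iff.1 hU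
  exact ⟨m, (mem_cylinder_iff_eq.1 hxz).symm ▸ hsub⟩

lemma isNowhereDense_iff_forall_exists_cylinder {s : Set (∀ n, E n)} :
    IsNowhereDense s ↔ ∀ x n, ∃ y ∈ cylinder x n, ∃ m, Disjoint (cylinder y m) s := by
  constructor
  · intro hs x n
    have hnot : ¬ cylinder x n ⊆ closure s := fun h => by
      have := interior_maximal h (isOpen_cylinder E x n) (self_mem_cylinder x n)
      rwa [hs] at this
    obtain ⟨y, hy, hys⟩ := not_subset.1 hnot
    obtain ⟨m, hm⟩ :=
      exists_cylinder_subset_of_mem_nhds (isClosed_closure.isOpen_compl.mem_nhds hys)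
    exact ⟨y, hy, m, disjoint_left.2 fun z hz hzs => hm hz (subset_closure hzs)⟩
  · intro h
    refine eq_empty_of_forall_notMem fun x hx => ?_
    obtain ⟨n, hn⟩ := exists_cylinder_subset_of_mem_nhds (isOpen_interior.mem_nhds hx)
    obtain ⟨y, hy, m, hdisj⟩ := h x n
    obtain ⟨z, hzm, hzs⟩ := mem_closure_iff.1 (interior_subset (hn hy)) _
      (isOpen_cylinder E y m) (self_mem_cylinder y m)
    exact disjoint_left.1 hdisj hzm hzs

lemma IsNowhereDense.exists_uniform_cylinder [∀ n, Finite (E n)] {s : Set (∀ n, E n)}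
    (hs : IsNowhereDense s) (n : ℕ) :
    ∃ L, n ≤ L ∧ ∀ x, ∃ y ∈ cylinder x n, Disjoint (cylinder y L) s := by
  set O : ℕ → Set (∀ n, E n) := fun L =>
    {x | ∃ y ∈ cylinder x n, Disjoint (cylinder y L) s}
  have hOopen : ∀ L, IsOpen (O L) := fun L =>
    isOpen_iff_forall_mem_open.2 fun x ⟨y, hy, hdisj⟩ =>
      ⟨cylinder x n, fun x' hx' => ⟨y, (mem_cylinder_iff_eq.1 hx').symm ▸ hy, hdisj⟩,
        isOpen_cylinder E x n, self_mem_cylinder x n⟩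
  have hOmono : Monotone O := fun L L' hLL' x ⟨y, hy, hdisj⟩ =>
    ⟨y, hy, hdisj.mono_left (cylinder_anti y hLL')⟩
  have hcover : Set.univ ⊆ ⋃ L, O L := fun x _ => by
    obtain ⟨y, hy, m, hdisj⟩ := isNowhereDense_iff_forall_exists_cylinder.1 hs x n
    exact mem_iUnion.2 ⟨m, y, hy, hdisj⟩
  obtain ⟨L, hL⟩ := isCompact_univ.elim_directed_cover O hOopen hcover hOmono.directed_le
  exact ⟨max L n, le_max_right L n, fun x => hOmono (le_max_left L n) (hL (mem_univ x))⟩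

end Cylinders

section BinaryExpansion

lemma sum_ofDigitsTerm_congr {b : ℕ} {x y : ℕ → Fin b} {n : ℕ} (h : y ∈ cylinder x n) :
    ∑ i ∈ Finset.range n, ofDigitsTerm y i = ∑ i ∈ Finset.range n, ofDigitsTerm x i :=
  Finset.sum_congr rfl fun i hi => by rw [ofDigitsTerm, ofDigitsTerm, h i (Finset.mem_range.1 hi)]

variable {b : ℕ} [NeZero b]

lemma ofDigits_mem_Icc_sum_ofDigitsTerm (x : ℕ → Fin b) (n : ℕ) :
    ofDigits x ∈ Icc (∑ i ∈ Finset.range n, ofDigitsTerm x i)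
      ((∑ i ∈ Finset.range n, ofDigitsTerm x i) + ((b : ℝ) ^ n)⁻¹) := by
  have hpos : 0 < ((b : ℝ) ^ n)⁻¹ := by have := NeZero.pos b; positivity
  have h0 := ofDigits_nonneg fun i => x (i + n)
  have h1 := ofDigits_le_one fun i => x (i + n)
  rw [ofDigits_eq_sum_add_ofDigits x n]
  constructor <;> nlinarith

lemma sum_ofDigitsTerm_add_inv_pow_le (x : ℕ → Fin b) {k m : ℕ} (hkm : k ≤ m) :
    (∑ i ∈ Finset.range m, ofDigitsTerm x i) + ((b : ℝ) ^ m)⁻¹ ≤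
      (∑ i ∈ Finset.range k, ofDigitsTerm x i) + ((b : ℝ) ^ k)⁻¹ := by
  induction m, hkm using Nat.le_induction with
  | base => rfl
  | succ m _ ih =>
    have hb : (b : ℝ) ≠ 0 := Nat.cast_ne_zero.2 (NeZero.ne b)
    have hterm : ofDigitsTerm x m + ((b : ℝ) ^ (m + 1))⁻¹ ≤ ((b : ℝ) ^ m)⁻¹ := by
      calc ofDigitsTerm x m + ((b : ℝ) ^ (m + 1))⁻¹
          ≤ (b - 1) * ((b : ℝ) ^ (m + 1))⁻¹ + ((b : ℝ) ^ (m + 1))⁻¹ := by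
            gcongr; exact ofDigitsTerm_le
        _ = ((b : ℝ) ^ m)⁻¹ := by field_simp; ring
    rw [Finset.sum_range_succ]
    linarith

/-- The interval must be open: its endpoints are also values of sequences outside the cylinder,
as in `0.0111… = 0.1`. -/
lemma mem_cylinder_of_ofDigits_mem_Ioo {x y : ℕ → Fin b} {m : ℕ}
    (h : ofDigits y ∈ Ioo (∑ i ∈ Finset.range m, ofDigitsTerm x i)
      ((∑ i ∈ Finset.range m, ofDigitsTerm x i) + ((b : ℝ) ^ m)⁻¹)) :
    y ∈ cylinder x m := by
  intro i hi
  induction i using Nat.strong_induction_on with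
  | _ i ih =>
  have hprefix := sum_ofDigitsTerm_congr (x := x) (y := y) (n := i)
    fun j hj => ih j hj (hj.trans hi)
  have hy := ofDigits_mem_Icc_sum_ofDigitsTerm y (i + 1)
  have hlow : ∑ j ∈ Finset.range (i + 1), ofDigitsTerm x j ≤
      ∑ j ∈ Finset.range m, ofDigitsTerm x j :=
    Finset.sum_le_sum_of_subset_of_nonneg (Finset.range_subset_range.2 hi)
      fun _ _ _ => ofDigitsTerm_nonneg
  have hhigh := sum_ofDigitsTerm_add_inv_pow_le x (show i + 1 ≤ m from hi)
  rw [Finset.sum_range_succ, hprefix] at hy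
  rw [Finset.sum_range_succ] at hlow hhigh
  have hc : 0 < ((b : ℝ) ^ (i + 1))⁻¹ := by have := NeZero.pos b; positivity
  by_contra hne
  rcases lt_or_gt_of_ne hne with hlt | hlt
  · have hd : ((y i : ℕ) : ℝ) + 1 ≤ (x i : ℕ) := by exact_mod_cast hlt
    have : ofDigitsTerm y i + ((b : ℝ) ^ (i + 1))⁻¹ ≤ ofDigitsTerm x i := by
      simp only [ofDigitsTerm]; nlinarith
    linarith [h.1, hy.2]
  · have hd : ((x i : ℕ) : ℝ) + 1 ≤ (y i : ℕ) := by exact_mod_cast hlt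
    have : ofDigitsTerm x i + ((b : ℝ) ^ (i + 1))⁻¹ ≤ ofDigitsTerm y i := by
      simp only [ofDigitsTerm]; nlinarith
    linarith [h.2, hy.1]

lemma hasOpenSmallImages_ofDigits {b : ℕ} (hb : 1 < b) :
    HasOpenSmallImages (ofDigits : (ℕ → Fin b) → ℝ) := by
  have : NeZero b := ⟨by omega⟩
  intro U hU ⟨x, hx⟩
  obtain ⟨m, hm⟩ := exists_cylinder_subset_of_mem_nhds (hU.mem_nhds hx)
  set a := ∑ i ∈ Finset.range m, ofDigitsTerm x i
  have hpos : 0 < ((b : ℝ) ^ m)⁻¹ := by have := NeZero.pos b; positivity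
  have h0 : 0 ≤ a := Finset.sum_nonneg fun _ _ => ofDigitsTerm_nonneg
  have h1 : a + ((b : ℝ) ^ m)⁻¹ ≤ 1 := by
    simpa using sum_ofDigitsTerm_add_inv_pow_le x (Nat.zero_le m)
  refine ⟨Ioo a (a + ((b : ℝ) ^ m)⁻¹), isOpen_Ioo, nonempty_Ioo.2 (by linarith), ?_,
    fun y hy => hm (mem_cylinder_of_ofDigits_mem_Ioo hy)⟩
  intro r hr
  obtain ⟨y, -, hy⟩ :=
    ofDigits_SurjOn hb (show r ∈ Icc 0 1 from ⟨by linarith [hr.1], by linarith [hr.2]⟩)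
  exact ⟨y, hy⟩

lemma hasOpenSmallImages_const_add_ofDigits {b : ℕ} (hb : 1 < b) (c : ℝ) :
    HasOpenSmallImages fun x : ℕ → Fin b => c + ofDigits x :=
  (hasOpenSmallImages_ofDigits hb).homeomorph_comp (Homeomorph.addLeft c)

lemma exists_int_add_ofDigits {b : ℕ} (hb : 1 < b) (r : ℝ) :
    ∃ k : ℤ, ∃ x : ℕ → Fin b, k + ofDigits x = r := by
  obtain ⟨x, -, hx⟩ := ofDigits_SurjOn hb ⟨Int.fract_nonneg r, (Int.fract_lt_one r).le⟩
  exact ⟨⌊r⌋, x, by rw [hx, Int.floor_add_fract]⟩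

end BinaryExpansion

section CardinalInvariants

lemma exists_eventually_le_of_countable {ι : Type*} [Countable ι] (φ : ι → ℕ → ℕ) :
    ∃ g : ℕ → ℕ, ∀ i, ∀ᶠ n in atTop, φ i n ≤ g n := by
  cases isEmpty_or_nonempty ι
  · exact ⟨0, isEmptyElim⟩
  obtain ⟨e, he⟩ := exists_surjective_nat ι
  refine ⟨fun n => (Finset.range (n + 1)).sup fun j => φ (e j) n, fun i => ?_⟩
  obtain ⟨j, rfl⟩ := he i
  filter_upwards [eventually_ge_atTop j] with n hn
  exact Finset.le_sup (f := fun j => φ (e j) n) (Finset.mem_range.2 (Nat.lt_succ_of_le hn))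

lemma unboundingNumber_mem : unboundingNumber ∈ {c | ∃ F : Set (ℕ → ℕ), #F = c ∧
    ∀ g : ℕ → ℕ, ∃ f ∈ F, ¬ (∀ᶠ n in atTop, f n ≤ g n)} := by
  refine csInf_mem ⟨_, Set.univ, rfl, fun g => ⟨g + 1, trivial, fun h => ?_⟩⟩
  obtain ⟨n, hn⟩ := h.exists
  simp at hn

lemma aleph0_lt_unboundingNumber : ℵ₀ < unboundingNumber := by
  obtain ⟨F, hFcard, hF⟩ := unboundingNumber_mem
  rw [← hFcard, ← not_le, le_aleph0_iff_set_countable]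
  intro hcount
  have := hcount.to_subtype
  obtain ⟨g, hg⟩ := exists_eventually_le_of_countable fun f : F => (f : ℕ → ℕ)
  obtain ⟨f, hf, hfg⟩ := hF g
  exact hfg (hg ⟨f, hf⟩)

lemma exists_eventually_le_of_lt_unboundingNumber {ι : Type} (hι : #ι < unboundingNumber)
    (φ : ι → ℕ → ℕ) : ∃ g : ℕ → ℕ, ∀ i, ∀ᶠ n in atTop, φ i n ≤ g n := by
  by_contra! hφ
  have : unboundingNumber ≤ #(range φ) := csInf_le' ⟨range φ, rfl, fun g => by
    obtain ⟨i, hi⟩ := hφ g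
    exact ⟨φ i, mem_range_self i, fun h => (h.and_frequently hi).exists.elim fun n hn =>
      hn.1.not_gt hn.2⟩⟩
  exact (this.trans mk_range_le).not_gt hι

lemma isMeagre_singleton_real (r : ℝ) : IsMeagre ({r} : Set ℝ) :=
  IsNowhereDense.isMeagre <| by rw [IsNowhereDense, closure_singleton, interior_singleton]

lemma covMeager_mem : covMeager ∈ {c | ∃ 𝒜 : Set (Set ℝ),
    (∀ A ∈ 𝒜, IsMeagre A) ∧ ⋃₀ 𝒜 = Set.univ ∧ #𝒜 = c} :=
  csInf_mem ⟨_, range singleton, forall_mem_range.2 isMeagre_singleton_real,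
    sUnion_eq_univ_iff.2 fun r => ⟨{r}, mem_range_self r, rfl⟩, rfl⟩

lemma aleph0_lt_covMeager : ℵ₀ < covMeager := by
  obtain ⟨𝒜, hmeagre, hcover, hcard⟩ := covMeager_mem
  rw [← hcard, ← not_le, le_aleph0_iff_set_countable]
  intro hcount
  have := isMeagre_biUnion hcount hmeagre
  rw [← sUnion_eq_biUnion, hcover] at this
  exact not_isMeagre_of_isOpen isOpen_univ univ_nonempty this

lemma mk_prod_lt_of_lt {ι κ : Type} [Countable κ] {c : Cardinal} (hι : #ι < c)
    (hc : ℵ₀ < c) : #(ι × κ) < c := by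
  rw [mk_prod, lift_id, lift_id]
  exact mul_lt_of_lt hc.le hι (mk_le_aleph0.trans_lt hc)

lemma exists_forall_notMem_of_lt_covMeager {ι : Type} (hι : #ι < covMeager)
    {M : ι → Set (ℕ → Fin 2)} (hM : ∀ i, IsMeagre (M i)) : ∃ x, ∀ i, x ∉ M i := by
  by_contra! hcover
  set A : ι × ℤ → Set ℝ := fun p => (fun x => (p.2 : ℝ) + ofDigits x) '' M p.1
  have hA : ∀ B ∈ range A, IsMeagre B := forall_mem_range.2 fun p =>
    (hM p.1).image_of_hasOpenSmallImages (continuous_const.add continuous_ofDigits)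
      (hasOpenSmallImages_const_add_ofDigits one_lt_two _)
  have hAcover : ⋃₀ range A = Set.univ := sUnion_eq_univ_iff.2 fun r => by
    obtain ⟨k, x, rfl⟩ := exists_int_add_ofDigits one_lt_two r
    obtain ⟨i, hi⟩ := hcover x
    exact ⟨A (i, k), mem_range_self _, x, hi, rfl⟩
  have : covMeager ≤ #(range A) := csInf_le' ⟨_, hA, hAcover, rfl⟩
  exact (this.trans mk_range_le).not_gt (mk_prod_lt_of_lt hι aleph0_lt_covMeager)

end CardinalInvariants

section InfinitelyEqual

open Function

lemma exists_surjective_from_bits (α : Type*) [Finite α] [Nonempty α] :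
    ∃ c, ∃ f : (Fin c → Fin 2) → α, Surjective f := by
  obtain ⟨k, ⟨e⟩⟩ := Finite.exists_equiv_fin α
  refine ⟨k, invFun fun a j => if e a = j then 1 else 0, invFun_surjective fun a a' h => ?_⟩
  simpa using congrFun h (e a')

lemma isNowhereDense_forall_decode_ne {T : ℕ → Type*} {c : ℕ → ℕ}
    {dec : ∀ n, (Fin (c n) → Fin 2) → T n} (hdec : ∀ n, Surjective (dec n)) (y : ∀ n, T n)
    (N : ℕ) : IsNowhereDense
      {x : ℕ → Fin 2 | ∀ n, N ≤ n → dec n (fun j => x (Nat.pair n j)) ≠ y n} := by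
  refine isNowhereDense_iff_forall_exists_cylinder.2 fun x k => ?_
  set n := max N k
  obtain ⟨v, hv⟩ := hdec n (y n)
  set z : ℕ → Fin 2 := fun a =>
    if h : (Nat.unpair a).1 = n ∧ (Nat.unpair a).2 < c n then v ⟨_, h.2⟩ else x a
  refine ⟨z, fun a ha => dif_neg fun h => ?_, Nat.pair n (c n),
    disjoint_left.2 fun w hw hwN => ?_⟩
  · have := Nat.unpair_left_le a
    omega
  refine hwN n (le_max_left N k) (hv ▸ congrArg (dec n) (funext fun j => ?_))
  rw [hw _ (Nat.pair_lt_pair_right n j.2)]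
  simp [z]

lemma exists_frequently_eq_of_lt_covMeager {ι : Type} (hι : #ι < covMeager) {T : ℕ → Type*}
    [∀ n, Finite (T n)] [∀ n, Nonempty (T n)] (φ : ι → ∀ n, T n) :
    ∃ g : ∀ n, T n, ∀ i, ∃ᶠ n in atTop, g n = φ i n := by
  choose c dec hdec using fun n => exists_surjective_from_bits (T n)
  obtain ⟨x, hx⟩ := exists_forall_notMem_of_lt_covMeager hι
    (M := fun i => ⋃ N, {x | ∀ n, N ≤ n → dec n (fun j => x (Nat.pair n j)) ≠ φ i n})
    fun i => isMeagre_iUnion fun N => (isNowhereDense_forall_decode_ne hdec (φ i) N).isMeagre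
  refine ⟨fun n => dec n fun j => x (Nat.pair n j), fun i => frequently_atTop.2 fun N => ?_⟩
  simpa using mt (mem_iUnion_of_mem N) (hx i)

end InfinitelyEqual

section MeagreCovers

variable {X : Type*} [TopologicalSpace X]

lemma IsNowhereDense.union {s t : Set X} (hs : IsNowhereDense s) (ht : IsNowhereDense t) :
    IsNowhereDense (s ∪ t) := by
  rw [IsNowhereDense, closure_union,
    interior_union_isClosed_of_interior_empty isClosed_closure ht]
  exact hs

lemma IsMeagre.exists_monotone_isNowhereDense {s : Set X} (hs : IsMeagre s) :
    ∃ V : ℕ → Set X, Monotone V ∧ (∀ n, IsNowhereDense (V n)) ∧ s ⊆ ⋃ n, V n := by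
  obtain ⟨S, hnd, hcount, hsub⟩ := isMeagre_iff_countable_union_isNowhereDense.1 hs
  obtain ⟨e, he⟩ := (hcount.insert ∅).exists_eq_range (insert_nonempty _ _)
  have hend : ∀ n, IsNowhereDense (e n) := fun n => by
    rcases (he ▸ mem_range_self n : e n ∈ insert ∅ S) with h | h
    · exact h ▸ isNowhereDense_empty
    · exact hnd _ h
  refine ⟨accumulate e, monotone_accumulate, fun n => ?_, ?_⟩
  · induction n with
    | zero => simpa [accumulate_zero_nat] using hend 0
    | succ n ih => simpa [accumulate_succ] using ih.union (hend (n + 1))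
  · rw [iUnion_accumulate, ← sUnion_range, ← he]
    exact hsub.trans (sUnion_mono (subset_insert _ _))

end MeagreCovers

section BoundedGaps

/-- Using the running maximum of `f` makes the window lengths monotone, which
`GapsBoundedBelow.exists_extension` relies on. -/
def boundedGaps (f : ℕ → ℕ) : Set (ℕ → Fin 2) :=
  {x | ∀ n, ∃ i, n ≤ i ∧ i ≤ n + partialSups f n ∧ x i = 1}

lemma isNowhereDense_boundedGaps (f : ℕ → ℕ) : IsNowhereDense (boundedGaps f) := by
  refine isNowhereDense_iff_forall_exists_cylinder.2 fun x k => ?_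
  refine ⟨fun i => if i < k then x i else 0, fun i hi => if_pos hi, k + partialSups f k + 1,
    disjoint_left.2 fun z hz hzf => ?_⟩
  obtain ⟨i, hki, hik, hzi⟩ := hzf k
  simp [hz i (by omega), show ¬ i < k by omega] at hzi

def GapsBoundedBelow (f : ℕ → ℕ) (t : ℕ → Fin 2) (p : ℕ) : Prop :=
  ∀ n < p, ∃ i < p, n ≤ i ∧ i ≤ n + partialSups f n ∧ t i = 1

lemma GapsBoundedBelow.exists_extension {f : ℕ → ℕ} {t : ℕ → Fin 2} {p : ℕ}
    (ht : GapsBoundedBelow f t p) {s : Set (ℕ → Fin 2)} {k L : ℕ} (hpk : p ≤ k)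
    (hkL : k ≤ L) (hLf : L ≤ partialSups f k)
    (hesc : ∀ x, ∃ y ∈ cylinder x k, Disjoint (cylinder y L) s) :
    ∃ t' p', p < p' ∧ cylinder t' p' ⊆ cylinder t p ∧ Disjoint (cylinder t' p') s ∧
      GapsBoundedBelow f t' p' := by
  obtain ⟨e, he, hdisj⟩ := hesc fun i => if i < p then t i else 1
  set t' : ℕ → Fin 2 := fun i => if i < L then e i else 1
  have ht'e : t' ∈ cylinder e L := fun i hi => if_pos hi
  have ht't : t' ∈ cylinder t p := fun i hi => by
    simp only [t', if_pos (show i < L by omega), he i (by omega), if_pos hi]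
  refine ⟨t', L + 1, by omega,
    (cylinder_anti t' (by omega)).trans (mem_cylinder_iff_eq.1 ht't).le,
    hdisj.mono_left ((cylinder_anti t' (by omega)).trans (mem_cylinder_iff_eq.1 ht'e).le),
    fun n hn => ?_⟩
  rcases lt_or_ge n p with hnp | hnp
  · obtain ⟨i, hip, hni, hin, hti⟩ := ht n hnp
    exact ⟨i, by omega, hni, hin, (ht't i hip).trans hti⟩
  rcases lt_or_ge n k with hnk | hnk
  · refine ⟨n, hn, le_rfl, by omega, ?_⟩
    simp only [t', if_pos (show n < L by omega), he n hnk, if_neg (show ¬ n < p by omega)]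
  · refine ⟨L, by omega, by omega, ?_, by simp [t']⟩
    have := (partialSups f).monotone hnk
    omega

lemma exists_mem_boundedGaps_forall_notMem {f : ℕ → ℕ} {V : ℕ → Set (ℕ → Fin 2)}
    {E : ℕ → ℕ → ℕ} (hEk : ∀ j k, k ≤ E j k)
    (hE : ∀ j k x, ∃ y ∈ cylinder x k, Disjoint (cylinder y (E j k)) (V j))
    (hfreq : ∀ j, ∃ᶠ k in atTop, E j k ≤ partialSups f k) :
    ∃ x ∈ boundedGaps f, ∀ j, x ∉ V j := by
  let Stage := {q : (ℕ → Fin 2) × ℕ // GapsBoundedBelow f q.1 q.2}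
  have hstep : ∀ j (q : Stage), ∃ q' : Stage, q.1.2 < q'.1.2 ∧
      cylinder q'.1.1 q'.1.2 ⊆ cylinder q.1.1 q.1.2 ∧ Disjoint (cylinder q'.1.1 q'.1.2) (V j) :=
    fun j q => by
      obtain ⟨k, hk, hkf⟩ := frequently_atTop.1 (hfreq j) q.1.2
      obtain ⟨t', p', h⟩ := q.2.exists_extension hk (hEk j k) hkf (hE j k)
      exact ⟨⟨(t', p'), h.2.2.2⟩, h.1, h.2.1, h.2.2.1⟩
  choose next hnext using hstep
  let q : ℕ → Stage := fun j => Nat.rec ⟨(0, 0), fun n hn => absurd hn n.not_lt_zero⟩ next j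
  have hlen : ∀ j, j ≤ (q j).1.2 := fun j => by
    induction j with
    | zero => exact le_rfl
    | succ j ih => exact (ih.trans_lt (hnext j (q j)).1)
  have hclosed : ∀ j, IsClosed (cylinder (q j).1.1 (q j).1.2) := fun j => by
    rw [cylinder_eq_pi]
    exact isClosed_set_pi fun i _ => isClosed_discrete _
  obtain ⟨x, hx⟩ := IsCompact.nonempty_iInter_of_sequence_nonempty_isCompact_isClosed
    (fun j => cylinder (q j).1.1 (q j).1.2)
    (fun j => (hnext j (q j)).2.1) (fun j => ⟨_, self_mem_cylinder _ _⟩) (hclosed 0).isCompact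
    hclosed
  rw [mem_iInter] at hx
  refine ⟨x, fun n => ?_, fun j hj => disjoint_left.1 (hnext j (q j)).2.2 (hx (j + 1)) hj⟩
  obtain ⟨i, hi, hni, hin, hqi⟩ := (q (n + 1)).2 n (hlen (n + 1))
  exact ⟨i, hni, hin, (hx (n + 1) i hi).trans hqi⟩

lemma not_isMeagre_iUnion_boundedGaps {F : Set (ℕ → ℕ)}
    (hF : ∀ g : ℕ → ℕ, ∃ f ∈ F, ¬ (∀ᶠ n in atTop, f n ≤ g n)) :
    ¬ IsMeagre (⋃ f ∈ F, boundedGaps f) := by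
  intro hM
  obtain ⟨V, -, hVnd, hMV⟩ := hM.exists_monotone_isNowhereDense
  choose E hEk hE using fun j k => (hVnd j).exists_uniform_cylinder k
  obtain ⟨g, hg⟩ := exists_eventually_le_of_countable E
  obtain ⟨f, hfF, hfg⟩ := hF g
  have hfreq : ∀ j, ∃ᶠ k in atTop, E j k ≤ partialSups f k := fun j =>
    ((not_eventually.1 hfg).and_eventually (hg j)).mono fun k hk =>
      hk.2.trans ((not_le.1 hk.1).le.trans (le_partialSups f k))
  obtain ⟨x, hxf, hxV⟩ := exists_mem_boundedGaps_forall_notMem hEk hE hfreq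
  obtain ⟨j, hj⟩ := mem_iUnion.1 (hMV (mem_biUnion hfF hxf))
  exact hxV j hj

end BoundedGaps

section Domination

def partitionPoints (g : ℕ → ℕ) : ℕ → ℕ
  | 0 => 0
  | m + 1 => partitionPoints g m + g (partitionPoints g m) + 1

lemma strictMono_partitionPoints (g : ℕ → ℕ) : StrictMono (partitionPoints g) :=
  strictMono_nat_of_lt_succ fun m => by simp only [partitionPoints]; omega

lemma eventually_lt_partitionPoints_succ {f g : ℕ → ℕ}
    (hfg : ∀ᶠ n in atTop, f n ≤ g n) :
    ∀ᶠ m in atTop, f (partitionPoints g m) < partitionPoints g (m + 1) :=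
  ((strictMono_partitionPoints g).tendsto_atTop.eventually hfg).mono fun m hm => by
    simp only [partitionPoints]; omega

end Domination

section Schemes

variable {ℓ : ℕ → ℕ} (G : ∀ m, (Fin (ℓ m) → Fin 2) → Fin (ℓ (m + 1)) → Fin 2)

def FollowsAt (x : ℕ → Fin 2) (m : ℕ) : Prop :=
  ∀ a (ha : a < ℓ (m + 1)), ℓ m ≤ a → x a = G m (fun q => x q) ⟨a, ha⟩

variable {G} in
lemma FollowsAt.of_mem_cylinder (hℓ : Monotone ℓ) {x y : ℕ → Fin 2} {m : ℕ}
    (h : FollowsAt G x m) (hy : y ∈ cylinder x (ℓ (m + 1))) :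
    FollowsAt G y m := by
  intro a ha hma
  have hprefix : (fun q : Fin (ℓ m) => y q) = (fun q : Fin (ℓ m) => x q) :=
    funext fun q : Fin (ℓ m) => hy q (q.2.trans_le (hℓ m.le_succ))
  rw [hy a ha, h a ha hma, hprefix]

lemma exists_followsAt_Ico (hℓ : Monotone ℓ) (x : ℕ → Fin 2) {m₀ m₁ : ℕ}
    (h : m₀ ≤ m₁) : ∃ y ∈ cylinder x (ℓ m₀), ∀ m ∈ Ico m₀ m₁, FollowsAt G y m := by
  induction m₁, h using Nat.le_induction with
  | base => exact ⟨x, self_mem_cylinder x _, by simp⟩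
  | succ m₁ hm₁ ih =>
    obtain ⟨y, hy, hfollow⟩ := ih
    set y' : ℕ → Fin 2 := fun a =>
      if h : ℓ m₁ ≤ a ∧ a < ℓ (m₁ + 1) then G m₁ (fun q => y q) ⟨a, h.2⟩ else y a
    have hy'y : y' ∈ cylinder y (ℓ m₁) := fun a ha => dif_neg fun h => by omega
    refine ⟨y', fun a ha => (hy'y a (ha.trans_le (hℓ hm₁))).trans (hy a ha), fun m hm => ?_⟩
    rcases (Nat.lt_succ_iff_lt_or_eq.1 hm.2) with hlt | rfl
    · exact (hfollow m ⟨hm.1, hlt⟩).of_mem_cylinder hℓ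
        fun a ha => (hy'y a (ha.trans_le (hℓ hlt)))
    · intro a ha hma
      have hprefix : (fun q : Fin (ℓ m) => y' q) = (fun q : Fin (ℓ m) => y q) :=
        funext fun q : Fin (ℓ m) => hy'y q q.2
      simp only [y', dif_pos (And.intro hma ha), hprefix]

lemma isNowhereDense_exists_not_followsAt (hℓ : StrictMono ℓ) {β : ℕ → ℕ}
    (hβ : StrictMono β) (N : ℕ) :
    IsNowhereDense {x | ∀ n, N ≤ n → ∃ m ∈ Ico (β n) (β (n + 1)), ¬ FollowsAt G x m} := by
  refine isNowhereDense_iff_forall_exists_cylinder.2 fun x k => ?_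
  set n := max N k
  obtain ⟨y, hy, hfollow⟩ := exists_followsAt_Ico G hℓ.monotone x (hβ.monotone n.le_succ)
  have hk : k ≤ ℓ (β n) := (le_max_right N k).trans ((hβ.id_le n).trans (hℓ.id_le _))
  refine ⟨y, fun a ha => hy a (ha.trans_le hk), ℓ (β (n + 1)),
    disjoint_left.2 fun z hz hzN => ?_⟩
  obtain ⟨m, hm, hnot⟩ := hzN n (le_max_left N k)
  exact hnot ((hfollow m hm).of_mem_cylinder hℓ.monotone
    fun a ha => hz a (ha.trans_le (hℓ.monotone hm.2)))

lemma exists_scheme_forall_notMem {s : Set (ℕ → Fin 2)} {k L : ℕ}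
    (hesc : ∀ x, ∃ y ∈ cylinder x k, Disjoint (cylinder y L) s) (L' : ℕ) :
    ∃ σ : (Fin k → Fin 2) → Fin L' → Fin 2, L ≤ L' → ∀ x : ℕ → Fin 2,
      (∀ a (ha : a < L'), k ≤ a → x a = σ (fun q => x q) ⟨a, ha⟩) → x ∉ s := by
  choose esc hesc_mem hesc_disj using hesc
  set extend : (Fin k → Fin 2) → ℕ → Fin 2 := fun v i =>
    if h : i < k then v ⟨i, h⟩ else 0
  refine ⟨fun v a => esc (extend v) a, fun hLL' x hx => ?_⟩
  have hmem : x ∈ cylinder (esc (extend fun q => x q)) L := fun a ha => by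
    rcases lt_or_ge a k with hak | hak
    · rw [hesc_mem _ a hak]
      simp [extend, hak]
    · exact hx a (ha.trans_le hLL') hak
  exact disjoint_left.1 (hesc_disj _) hmem

end Schemes

lemma isMeagre_iUnion_of_mk_lt_min {ι : Type} (hι : #ι < min unboundingNumber covMeager)
    {M : ι → Set (ℕ → Fin 2)} (hM : ∀ i, IsMeagre (M i)) : IsMeagre (⋃ i, M i) := by
  have hb := hι.trans_le (min_le_left _ _)
  choose V hVmono hVnd hMV using fun i => (hM i).exists_monotone_isNowhereDense
  choose E _ hE using fun i k => (hVnd i k).exists_uniform_cylinder k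
  obtain ⟨g₁, hg₁⟩ := exists_eventually_le_of_lt_unboundingNumber hb E
  set ℓ := partitionPoints g₁
  choose σ hσ using fun i m => exists_scheme_forall_notMem (hE i (ℓ m)) (ℓ (m + 1))
  obtain ⟨G, hG⟩ := exists_frequently_eq_of_lt_covMeager (hι.trans_le (min_le_right _ _))
    (T := fun m => (Fin (ℓ m) → Fin 2) → Fin (ℓ (m + 1)) → Fin 2) σ
  have hgood : ∀ i, ∃ᶠ m in atTop, G m = σ i m ∧ E i (ℓ m) < ℓ (m + 1) := fun i =>
    (hG i).and_eventually (eventually_lt_partitionPoints_succ (hg₁ i))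
  choose u hu_ge hu using fun i k => frequently_atTop.1 (hgood i) k
  obtain ⟨g₂, hg₂⟩ := exists_eventually_le_of_lt_unboundingNumber hb u
  set β := partitionPoints g₂
  refine (isMeagre_iUnion fun N => (isNowhereDense_exists_not_followsAt G
    (strictMono_partitionPoints g₁) (strictMono_partitionPoints g₂) N).isMeagre).mono
    (iUnion_subset fun i x hx => ?_)
  obtain ⟨N₀, hxN₀⟩ := mem_iUnion.1 (hMV i hx)
  obtain ⟨N, hN⟩ := eventually_atTop.1
    ((eventually_lt_partitionPoints_succ (hg₂ i)).and (eventually_ge_atTop N₀))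
  refine mem_iUnion.2 ⟨N, fun n hn => ?_⟩
  by_contra! hfollow
  set m := u i (β n)
  obtain ⟨hGm, hEm⟩ := hu i (β n)
  have hfollow_m : FollowsAt G x m := hfollow m ⟨hu_ge i _, (hN n hn).1⟩
  rw [FollowsAt, hGm] at hfollow_m
  have hN₀m : N₀ ≤ ℓ m := (hN n hn).2.trans <| ((strictMono_partitionPoints g₂).id_le n).trans
    ((hu_ge i _).trans ((strictMono_partitionPoints g₁).id_le m))
  exact hσ i m hEm.le x hfollow_m (hVmono i hN₀m hxN₀)

lemma addMeager_le_unboundingNumber : addMeager ≤ unboundingNumber := by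
  obtain ⟨F, hFcard, hF⟩ := unboundingNumber_mem
  have hc := continuous_ofDigits (b := 2)
  have ho := hasOpenSmallImages_ofDigits one_lt_two
  set 𝒜 := (fun f => ofDigits '' boundedGaps f) '' F
  have hmeagre : ∀ A ∈ 𝒜, IsMeagre A := forall_mem_image.2 fun f _ =>
    ((isNowhereDense_boundedGaps f).image_of_hasOpenSmallImages hc ho).isMeagre
  have hsub : ⋃ f ∈ F, boundedGaps f ⊆ ofDigits ⁻¹' ⋃₀ 𝒜 :=
    iUnion₂_subset fun f hf x hx => ⟨_, mem_image_of_mem _ hf, mem_image_of_mem ofDigits hx⟩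
  have hnot : ¬ IsMeagre (⋃₀ 𝒜) := fun h =>
    not_isMeagre_iUnion_boundedGaps hF ((h.preimage_of_hasOpenSmallImages hc ho).mono hsub)
  calc addMeager ≤ #𝒜 := csInf_le' ⟨𝒜, hmeagre, hnot, rfl⟩
    _ ≤ #F := mk_image_le
    _ = unboundingNumber := hFcard

lemma addMeager_le_covMeager : addMeager ≤ covMeager := by
  obtain ⟨𝒜, hmeagre, hcover, hcard⟩ := covMeager_mem
  exact hcard ▸ csInf_le'
    ⟨𝒜, hmeagre, hcover ▸ not_isMeagre_of_isOpen isOpen_univ univ_nonempty, rfl⟩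

lemma min_le_addMeager : min unboundingNumber covMeager ≤ addMeager := by
  obtain ⟨𝒜₀, hmeagre₀, hcover₀, -⟩ := covMeager_mem
  refine le_csInf ⟨_, 𝒜₀, hmeagre₀,
    hcover₀ ▸ not_isMeagre_of_isOpen isOpen_univ univ_nonempty, rfl⟩ ?_
  rintro _ ⟨𝒜, hmeagre, hnot, rfl⟩
  by_contra! hlt
  have hc (c : ℝ) := continuous_const.add (continuous_ofDigits (b := 2)) (f := fun _ => c)
  have ho (c : ℝ) := hasOpenSmallImages_const_add_ofDigits one_lt_two c
  have hM : IsMeagre (⋃ p : 𝒜 × ℤ, (fun x => (p.2 : ℝ) + ofDigits x) ⁻¹' p.1) :=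
    isMeagre_iUnion_of_mk_lt_min
      (mk_prod_lt_of_lt hlt (lt_min aleph0_lt_unboundingNumber aleph0_lt_covMeager))
      fun p => (hmeagre _ p.1.2).preimage_of_hasOpenSmallImages (hc _) (ho _)
  refine hnot <| (isMeagre_iUnion fun k : ℤ =>
    hM.image_of_hasOpenSmallImages (hc k) (ho k)).mono ?_
  rintro r ⟨A, hA, hrA⟩
  obtain ⟨k, x, rfl⟩ := exists_int_add_ofDigits one_lt_two r
  exact mem_iUnion.2 ⟨k, x, mem_iUnion.2 ⟨(⟨A, hA⟩, k), hrA⟩, rfl⟩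

/-- `add(M) = min {𝔟, cov(M)}`. -/
theorem addMeager_eq_min : addMeager = min unboundingNumber covMeager :=
  le_antisymm (le_min addMeager_le_unboundingNumber addMeager_le_covMeager) min_le_addMeager
end

section
/- An ideal I on ω containing all finite sets has the Baire property (as a subset of 2^ω identified with P(ω)) if and only if I is meager, if and only if there exists a partition {I_n : n ∈ ω} of ω into finite intervals such that for every X ∈ I, I_n ⊄ X for all but finitely many n. -/
open Set

namespace TalagrandAux



lemma exists_cyl {U : Set (ℕ → Bool)} (hU : IsOpen U) {z : ℕ → Bool} (hz : z ∈ U) :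
    ∃ N, ∀ y : ℕ → Bool, (∀ i < N, y i = z i) → y ∈ U := by
  obtain ⟨I, u, hIu, hsub⟩ := isOpen_pi_iff.mp hU z hz
  refine ⟨(I.sup id) + 1, fun y hy => hsub ?_⟩
  intro a ha
  have h1 : a ≤ I.sup id := Finset.le_sup (f := id) ha
  rw [hy a (Nat.lt_succ_of_le h1)]
  exact (hIu a ha).2

lemma isOpen_cyl (m : ℕ) (s : ℕ → Bool) : IsOpen {y : ℕ → Bool | ∀ i < m, y i = s i} := by
  have : {y : ℕ → Bool | ∀ i < m, y i = s i}
      = ⋂ i ∈ Finset.range m, {y : ℕ → Bool | y i = s i} := by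
    ext y; simp [Finset.mem_range]
  rw [this]
  refine isOpen_biInter_finset fun i _ => ?_
  have : {y : ℕ → Bool | y i = s i} = (fun y : ℕ → Bool => y i) ⁻¹' {b : Bool | b = s i} := rfl
  rw [this]
  exact IsOpen.preimage (continuous_apply i) (isOpen_discrete _)

lemma avoid {F : Set (ℕ → Bool)} (hcl : IsClosed F) (hnd : IsNowhereDense F)
    (s : ℕ → Bool) (m : ℕ) :
    ∃ N, m < N ∧ ∃ z : ℕ → Bool, (∀ i < m, z i = s i) ∧
      ∀ y : ℕ → Bool, (∀ i < N, y i = z i) → y ∉ F := by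
  have hdense : Dense Fᶜ := (isClosed_isNowhereDense_iff_compl.mp ⟨hcl, hnd⟩).2
  have hCopen := isOpen_cyl m s
  obtain ⟨z, hzF, hzC⟩ := hdense.exists_mem_open hCopen ⟨s, fun i _ => rfl⟩
  obtain ⟨N0, hN0⟩ := exists_cyl (hcl.isOpen_compl) hzF
  refine ⟨max N0 (m + 1), lt_of_lt_of_le (Nat.lt_succ_self m) (le_max_right _ _), z, hzC, ?_⟩
  intro y hy
  exact hN0 y fun i hi => hy i (lt_of_lt_of_le hi (le_max_left _ _))

lemma nwd_union {s t : Set (ℕ → Bool)} (hs : IsClosed s) (ht : IsClosed t)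
    (hs' : IsNowhereDense s) (ht' : IsNowhereDense t) :
    IsClosed (s ∪ t) ∧ IsNowhereDense (s ∪ t) := by
  have h1 := isClosed_isNowhereDense_iff_compl.mp ⟨hs, hs'⟩
  have h2 := isClosed_isNowhereDense_iff_compl.mp ⟨ht, ht'⟩
  refine isClosed_isNowhereDense_iff_compl.mpr ?_
  rw [compl_union]
  exact ⟨h1.1.inter h2.1, h1.2.inter_of_isOpen_left h2.2 h1.1⟩

lemma isMeagre_iUnion' {X : Type*} [TopologicalSpace X] {ι : Sort*} [Countable ι]
    {s : ι → Set X} (hs : ∀ i, IsMeagre (s i)) : IsMeagre (⋃ i, s i) := by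
  rw [IsMeagre, compl_iUnion]
  exact (countable_iInter_mem).mpr hs

lemma nwd_isMeagre {X : Type*} [TopologicalSpace X] {s : Set X} (h : IsNowhereDense s) :
    IsMeagre s :=
  isMeagre_iff_countable_union_isNowhereDense.mpr
    ⟨{s}, by simpa using h, countable_singleton s, by simp⟩

def tog (w : ℕ → Bool) : (ℕ → Bool) ≃ₜ (ℕ → Bool) where
  toFun x := fun i => xor (w i) (x i)
  invFun x := fun i => xor (w i) (x i)
  left_inv x := by
    funext i; show xor (w i) (xor (w i) (x i)) = x i; cases w i <;> cases x i <;> rfl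
  right_inv x := by
    funext i; show xor (w i) (xor (w i) (x i)) = x i; cases w i <;> cases x i <;> rfl
  continuous_toFun := by
    exact continuous_pi fun i =>
      (continuous_of_discreteTopology (f := fun b => xor (w i) b)).comp (continuous_apply i)
  continuous_invFun := by
    exact continuous_pi fun i =>
      (continuous_of_discreteTopology (f := fun b => xor (w i) b)).comp (continuous_apply i)

lemma tog_apply (w x : ℕ → Bool) (i : ℕ) : tog w x i = xor (w i) (x i) := rfl

/-- Part B: a partition witnessing non-inclusion gives meagerness. -/
lemma part_meagre (I : Set (Set ℕ)) (I' : Set (ℕ → Bool))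
    (hI' : I' = {x : ℕ → Bool | {n : ℕ | x n = true} ∈ I})
    (k : ℕ → ℕ) (hk : StrictMono k)
    (h : ∀ X ∈ I, {n : ℕ | Set.Ico (k n) (k (n + 1)) ⊆ X}.Finite) :
    IsMeagre I' := by
  classical
  set F : ℕ → Set (ℕ → Bool) :=
    fun m => {x | ∀ n, m ≤ n → ∃ i, k n ≤ i ∧ i < k (n+1) ∧ x i = false} with hF
  have hclosed : ∀ m, IsClosed (F m) := by
    intro m
    have : F m = ⋂ n ∈ {n : ℕ | m ≤ n},
        ⋃ i ∈ Finset.Ico (k n) (k (n+1)), {x : ℕ → Bool | x i = false} := by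
      ext x; simp [hF, Finset.mem_Ico, and_assoc]
    rw [this]
    refine isClosed_biInter fun n _ => ?_
    refine Set.Finite.isClosed_biUnion (Finset.finite_toSet _) fun i _ => ?_
    have : {x : ℕ → Bool | x i = false} = (fun x : ℕ → Bool => x i) ⁻¹' {b : Bool | b = false} :=
      rfl
    rw [this]
    exact IsClosed.preimage (continuous_apply i) (isClosed_discrete _)
  have hnwd : ∀ m, IsNowhereDense (F m) := by
    intro m
    rw [(hclosed m).isNowhereDense_iff, Set.eq_empty_iff_forall_notMem]
    intro x hx
    obtain ⟨N, hN⟩ := exists_cyl isOpen_interior hx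
    set n := max m N with hn
    set y : ℕ → Bool := fun i => if k n ≤ i ∧ i < k (n+1) then true else x i with hy
    have hyint : y ∈ interior (F m) := by
      apply hN
      intro i hi
      have hc : ¬ (k n ≤ i ∧ i < k (n+1)) := by
        rintro ⟨h1, -⟩
        have : N ≤ k n := le_trans (le_max_right m N) hk.le_apply
        omega
      simp [hy, hc]
    obtain ⟨i, h1, h2, h3⟩ := interior_subset hyint n (le_max_left m N)
    rw [hy] at h3
    simp [h1, h2] at h3
  have hsub : I' ⊆ ⋃ m, F m := by
    intro x hxI
    rw [hI'] at hxI
    obtain ⟨m, hm⟩ := (h _ hxI).bddAbove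
    refine Set.mem_iUnion.mpr ⟨m + 1, fun n hn => ?_⟩
    have hns : ¬ Set.Ico (k n) (k (n + 1)) ⊆ {n | x n = true} := by
      intro hmem
      exact absurd (hm hmem) (by omega)
    obtain ⟨i, hi1, hi2⟩ := Set.not_subset.mp hns
    rw [Set.mem_Ico] at hi1
    exact ⟨i, hi1.1, hi1.2, by simpa using hi2⟩
  exact ((isMeagre_iUnion fun m => nwd_isMeagre (hnwd m))).mono hsub

lemma tog_tog (w x : ℕ → Bool) : tog w (tog w x) = x := (tog w).left_inv x


lemma bp_meagre (I : Set (Set ℕ))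
    (hdown : ∀ X ∈ I, ∀ Y ⊆ X, Y ∈ I)
    (hunion : ∀ X ∈ I, ∀ Y ∈ I, X ∪ Y ∈ I)
    (hfin : ∀ X : Set ℕ, X.Finite → X ∈ I)
    (hproper : Set.univ ∉ I)
    (I' : Set (ℕ → Bool))
    (hI' : I' = {x : ℕ → Bool | {n : ℕ | x n = true} ∈ I})
    (hBM : BaireMeasurableSet I') : IsMeagre I' := by
  classical
  by_contra hnm
  -- invariance of I' under finitely supported toggles
  have hinv : ∀ w : ℕ → Bool, {i | w i = true}.Finite →
      ∀ x : ℕ → Bool, x ∈ I' ↔ tog w x ∈ I' := by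
    have key : ∀ w : ℕ → Bool, {i | w i = true}.Finite →
        ∀ x : ℕ → Bool, x ∈ I' → tog w x ∈ I' := by
      intro w hw x hx
      rw [hI'] at hx ⊢
      refine hdown _ (hunion _ hx _ (hfin _ hw)) _ ?_
      intro n hn
      rw [Set.mem_setOf_eq, tog_apply] at hn
      rcases hwn : w n with _ | _
      · left; rw [hwn] at hn; simpa using hn
      · right; exact hwn
    intro w hw x
    refine ⟨key w hw x, fun h => ?_⟩
    have := key w hw _ h
    rwa [tog_tog] at this
  -- get an open set U with I' =ᵇ U
  obtain ⟨U, hUopen, hUeq⟩ := hBM.residualEq_isOpen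
  rw [Filter.eventuallyEq_set] at hUeq
  have hM : IsMeagre {x | ¬ (x ∈ I' ↔ x ∈ U)} := by
    rw [IsMeagre]
    have he : {x | ¬ (x ∈ I' ↔ x ∈ U)}ᶜ = {x | x ∈ I' ↔ x ∈ U} := by
      ext x; simp [Set.mem_compl_iff]
    rw [he]
    exact hUeq
  -- U is nonempty
  rcases U.eq_empty_or_nonempty with hUe | ⟨z, hz⟩
  · refine hnm (hM.mono fun x hx => ?_)
    simp only [Set.mem_setOf_eq]
    intro hiff
    have hxu : x ∈ U := hiff.mp hx
    rw [hUe] at hxu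
    exact hxu
  · obtain ⟨N, hN⟩ := exists_cyl hUopen hz
    -- the cylinder C around z of length N, minus I', is meager
    have hCm : IsMeagre ({y : ℕ → Bool | ∀ i < N, y i = z i} \ I') := by
      refine hM.mono fun y hy => ?_
      simp only [Set.mem_diff] at hy
      have hyU : y ∈ U := hN y hy.1
      simp only [Set.mem_setOf_eq]
      intro h; exact hy.2 (h.mpr hyU)
    -- the complement of I' is covered by finitely many toggled copies
    set W : (Fin N → Bool) → (ℕ → Bool) :=
      fun t i => if h : i < N then t ⟨i, h⟩ else false with hW
    have hWfin : ∀ t, {i | W t i = true}.Finite := by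
      intro t
      refine (Set.finite_Iio N).subset fun i hi => ?_
      simp only [Set.mem_setOf_eq, hW] at hi
      by_contra hc
      simp only [Set.mem_Iio, not_lt] at hc
      rw [dif_neg (by omega)] at hi
      exact Bool.false_ne_true hi
    have hcover : I'ᶜ ⊆ ⋃ t : Fin N → Bool,
        (tog (W t)) ⁻¹' ({y : ℕ → Bool | ∀ i < N, y i = z i} \ I') := by
      intro x hx
      refine Set.mem_iUnion.mpr ⟨fun i => xor (x i) (z i), ?_⟩
      constructor
      · intro i hi
        have hr : tog (W fun j => xor (x j) (z j)) x i
            = xor (if h : i < N then xor (x i) (z i) else false) (x i) := rfl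
        rw [hr, dif_pos hi]
        show xor (xor (x i) (z i)) (x i) = z i
        cases x i <;> cases z i <;> rfl
      · intro hmem
        exact hx ((hinv (W fun j => xor (x j) (z j)) (hWfin (fun j => xor (x j) (z j))) x).mpr hmem)
    have hc : IsMeagre I'ᶜ := by
      refine (isMeagre_iUnion' fun t : Fin N → Bool => ?_).mono hcover
      exact hCm.preimage_of_isOpenMap (tog (W t)).continuous (tog (W t)).isOpenMap
    -- now I' and its "complement flip" are both comeager
    have hres : I' ∈ residual (ℕ → Bool) := by
      rw [IsMeagre, compl_compl] at hc; exact hc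
    set σ : (ℕ → Bool) ≃ₜ (ℕ → Bool) := tog (fun _ => true) with hσ
    have hres2 : σ ⁻¹' I' ∈ residual (ℕ → Bool) := by
      have := tendsto_residual_of_isOpenMap σ.continuous σ.isOpenMap
      exact this hres
    obtain ⟨x, hx1, hx2⟩ := (dense_of_mem_residual
      (Filter.inter_mem hres hres2)).nonempty
    rw [hI'] at hx1
    have hx2' : {n | (!(x n)) = true} ∈ I := by
      have h2 : σ x ∈ I' := hx2
      rw [hI'] at h2
      have hs : ∀ n, σ x n = !(x n) := by
        intro n; show xor true (x n) = !(x n); cases x n <;> rfl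
      have he : {n | σ x n = true} = {n | (!(x n)) = true} := by
        ext n; rw [Set.mem_setOf_eq, Set.mem_setOf_eq, hs n]
      have h3 : {n | σ x n = true} ∈ I := h2
      rwa [he] at h3
    refine hproper (hdown _ (hunion _ hx1 _ hx2') _ fun n _ => ?_)
    rcases hxn : x n with _ | _
    · right; simp [hxn]
    · left; exact hxn

lemma step {F : Set (ℕ → Bool)} (hcl : IsClosed F) (hnd : IsNowhereDense F) (m : ℕ) :
    ∃ N, m < N ∧ ∀ s : ℕ → Bool, ∃ z : ℕ → Bool, (∀ i < m, z i = s i) ∧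
      ∀ y : ℕ → Bool, (∀ i < N, y i = z i) → y ∉ F := by
  classical
  have H : ∀ t : Fin m → Bool, ∃ N, m < N ∧ ∃ z : ℕ → Bool,
      (∀ i < m, z i = (fun j : ℕ => if h : j < m then t ⟨j, h⟩ else false) i) ∧
      ∀ y : ℕ → Bool, (∀ i < N, y i = z i) → y ∉ F :=
    fun t => avoid hcl hnd _ m
  choose Nt hNt zt hzt1 hzt2 using H
  refine ⟨Finset.univ.sup Nt + m + 1, by omega, fun s => ?_⟩
  set t : Fin m → Bool := fun j => s j with ht
  refine ⟨zt t, ?_, ?_⟩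
  · intro i hi
    have h1 : zt t i = if h : i < m then t ⟨i, h⟩ else false := hzt1 t i hi
    rw [dif_pos hi] at h1
    exact h1
  · intro y hy
    refine hzt2 t y fun i hi => hy i ?_
    have : Nt t ≤ Finset.univ.sup Nt := Finset.le_sup (Finset.mem_univ t)
    omega


lemma meagre_part (I : Set (Set ℕ))
    (hdown : ∀ X ∈ I, ∀ Y ⊆ X, Y ∈ I)
    (I' : Set (ℕ → Bool))
    (hI' : I' = {x : ℕ → Bool | {n : ℕ | x n = true} ∈ I})
    (hm : IsMeagre I') :
    ∃ k : ℕ → ℕ, StrictMono k ∧ k 0 = 0 ∧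
      ∀ X ∈ I, {n : ℕ | Set.Ico (k n) (k (n + 1)) ⊆ X}.Finite := by
  classical
  obtain ⟨S, hSnwd, hScnt, hSsub⟩ := isMeagre_iff_countable_union_isNowhereDense.mp hm
  obtain ⟨f, hf⟩ := Set.Countable.exists_eq_range (hScnt.insert ∅) (Set.insert_nonempty _ _)
  have hfnwd : ∀ n, IsNowhereDense (f n) := by
    intro n
    have hmem : f n ∈ insert ∅ S := hf ▸ Set.mem_range_self n
    rcases Set.mem_insert_iff.mp hmem with h | h
    · rw [h]; exact isNowhereDense_empty
    · exact hSnwd _ h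
  obtain ⟨F, hF0, hFs⟩ : ∃ F : ℕ → Set (ℕ → Bool), F 0 = closure (f 0) ∧
      ∀ n, F (n+1) = F n ∪ closure (f (n+1)) :=
    ⟨fun n => Nat.rec (closure (f 0)) (fun n Fn => Fn ∪ closure (f (n+1))) n, rfl, fun _ => rfl⟩
  have hFclnwd : ∀ n, IsClosed (F n) ∧ IsNowhereDense (F n) := by
    intro n
    induction n with
    | zero => rw [hF0]; exact ⟨isClosed_closure, (hfnwd 0).closure⟩
    | succ n ih =>
      rw [hFs]
      exact nwd_union ih.1 isClosed_closure ih.2 (hfnwd (n+1)).closure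
  have hFmono : Monotone F := monotone_nat_of_le_succ fun n => by
    rw [hFs]; exact Set.subset_union_left
  have hfsubF : ∀ n, f n ⊆ F n := by
    intro n
    cases n with
    | zero => rw [hF0]; exact subset_closure
    | succ n => rw [hFs]; exact subset_closure.trans Set.subset_union_right
  have hcover : I' ⊆ ⋃ n, F n := by
    intro x hx
    obtain ⟨s, hsS, hxs⟩ := hSsub hx
    have hsr : s ∈ Set.range f := hf ▸ Set.mem_insert_of_mem _ hsS
    obtain ⟨n, rfl⟩ := hsr
    exact Set.mem_iUnion.mpr ⟨n, hfsubF n hxs⟩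
  choose N hNgt hstep using fun n m => step (hFclnwd n).1 (hFclnwd n).2 m
  choose z hz1 hz2 using hstep
  obtain ⟨k, hk0, hks⟩ : ∃ k : ℕ → ℕ, k 0 = 0 ∧ ∀ n, k (n+1) = N n (k n) :=
    ⟨fun n => Nat.rec 0 (fun n kn => N n kn) n, rfl, fun _ => rfl⟩
  have hkmono : StrictMono k := strictMono_nat_of_lt_succ fun n => by
    rw [hks]; exact hNgt n (k n)
  refine ⟨k, hkmono, hk0, ?_⟩
  intro X hX
  by_contra hA
  set A := {n : ℕ | Set.Ico (k n) (k (n + 1)) ⊆ X} with hAdef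
  set χ : ℕ → Bool := fun i => if i ∈ X then true else false with hχdef
  obtain ⟨y, hy0, hys⟩ : ∃ y : ℕ → (ℕ → Bool), y 0 = χ ∧ ∀ n, y (n+1) =
      if n ∈ A then (fun i => if i < k (n+1) then z n (k n) (y n) i else χ i) else y n :=
    ⟨fun n => Nat.rec χ (fun n yn =>
      if n ∈ A then (fun i => if i < k (n+1) then z n (k n) yn i else χ i) else yn) n,
      rfl, fun _ => rfl⟩
  have hstep0 : ∀ n, ∀ i < k n, y (n+1) i = y n i := by
    intro n i hi
    rw [hys]
    by_cases hn : n ∈ A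
    · rw [if_pos hn]
      show (if i < k (n+1) then z n (k n) (y n) i else χ i) = y n i
      rw [if_pos (lt_of_lt_of_le hi (hkmono.monotone (Nat.le_succ n)))]
      exact hz1 n (k n) (y n) i hi
    · rw [if_neg hn]
  have hstable : ∀ n m, n ≤ m → ∀ i, i < k n → y m i = y n i := by
    intro n m hnm i hi
    induction m, hnm using Nat.le_induction with
    | base => rfl
    | succ m hm ih =>
      rw [hstep0 m i (lt_of_lt_of_le hi (hkmono.monotone hm)), ih]
  have hout : ∀ n, ∀ i, k n ≤ i → y n i = χ i := by
    intro n
    induction n with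
    | zero => intro i _; rw [hy0]
    | succ n ih =>
      intro i hi
      rw [hys]
      by_cases hn : n ∈ A
      · rw [if_pos hn]
        show (if i < k (n+1) then z n (k n) (y n) i else χ i) = χ i
        rw [if_neg (not_lt.mpr hi)]
      · rw [if_neg hn]
        exact ih i (le_trans (hkmono.monotone (Nat.le_succ n)) hi)
  set Y : ℕ → Bool := fun i => y (i+1) i with hYdef
  have hYeq : ∀ n, ∀ i, i < k n → Y i = y n i := by
    intro n i hi
    have hex : ∃ j, i < k j := ⟨n, hi⟩
    have hfind : i < k (Nat.find hex) := Nat.find_spec hex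
    have hn'le : Nat.find hex ≤ i + 1 := by
      rcases Nat.eq_zero_or_pos (Nat.find hex) with h0 | hpos
      · omega
      · have hmin : ¬ i < k (Nat.find hex - 1) := Nat.find_min hex (by omega)
        have hle : Nat.find hex - 1 ≤ k (Nat.find hex - 1) := hkmono.le_apply
        omega
    have h1 : y (i+1) i = y (Nat.find hex) i := hstable (Nat.find hex) (i+1) hn'le i hfind
    have h2 : y n i = y (Nat.find hex) i := hstable (Nat.find hex) n (Nat.find_min' hex hi) i hfind
    show y (i+1) i = y n i
    rw [h1]; exact h2.symm
  have hYsub : {i | Y i = true} ⊆ X := by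
    intro i hi
    have hiY : Y i = true := hi
    have hex : ∃ j, i < k j := ⟨i+1, lt_of_lt_of_le (Nat.lt_succ_self i) hkmono.le_apply⟩
    have hfind : i < k (Nat.find hex) := Nat.find_spec hex
    have hn0 : Nat.find hex ≠ 0 := by
      intro h; rw [h, hk0] at hfind; omega
    obtain ⟨nn, hnn⟩ := Nat.exists_eq_succ_of_ne_zero hn0
    have hlow : k nn ≤ i := not_lt.mp (Nat.find_min hex (by omega))
    have hhigh : i < k (nn + 1) := by rw [hnn] at hfind; exact hfind
    have hYi : Y i = y (nn+1) i := hYeq (nn+1) i hhigh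
    by_cases hn : nn ∈ A
    · exact hn ⟨hlow, hhigh⟩
    · have he1 : y (nn+1) i = χ i := by
        rw [hys, if_neg hn]; exact hout nn i hlow
      have hχ : χ i = true := by rw [← he1, ← hYi]; exact hiY
      by_contra hx
      have hχ2 : χ i = false := by
        show (if i ∈ X then true else false) = false
        rw [if_neg hx]
      rw [hχ2] at hχ
      exact Bool.false_ne_true hχ
  have hYF : ∀ n ∈ A, Y ∉ F n := by
    intro n hn
    refine hz2 n (k n) (y n) Y fun i hi => ?_
    have hik : i < k (n+1) := by rw [hks]; exact hi
    rw [hYeq (n+1) i hik, hys, if_pos hn]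
    show (if i < k (n+1) then z n (k n) (y n) i else χ i) = z n (k n) (y n) i
    rw [if_pos hik]
  have hYnot : Y ∉ ⋃ n, F n := by
    intro h
    rw [Set.mem_iUnion] at h
    obtain ⟨m, hm⟩ := h
    have hns : ¬ A ⊆ Set.Iic m := fun hs => hA ((Set.finite_Iic m).subset hs)
    obtain ⟨n, hnA, hngt⟩ := Set.not_subset.mp hns
    have hmn : m ≤ n := by
      simp only [Set.mem_Iic, not_le] at hngt; omega
    exact hYF n hnA (hFmono hmn hm)
  have hYX : {i | Y i = true} ∈ I := hdown X hX _ hYsub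
  exact hYnot (hcover (by rw [hI']; exact hYX))

end TalagrandAux

/-- Talagrand's characterization of meager ideals. Let `I` be an ideal on `ω`
containing all finite sets, identified with the subset `I'` of Cantor space `2^ω`
via characteristic functions. Then: `I'` has the Baire property iff `I'` is meager,
iff there is a partition of `ω` into consecutive finite intervals `[k n, k (n+1))`
such that every `X ∈ I` contains only finitely many of these intervals. -/
theorem talagrand_meager_ideal (I : Set (Set ℕ))
    (hdown : ∀ X ∈ I, ∀ Y ⊆ X, Y ∈ I)
    (hunion : ∀ X ∈ I, ∀ Y ∈ I, X ∪ Y ∈ I)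
    (hfin : ∀ X : Set ℕ, X.Finite → X ∈ I)
    (hproper : Set.univ ∉ I)
    (I' : Set (ℕ → Bool))
    (hI' : I' = {x : ℕ → Bool | {n : ℕ | x n = true} ∈ I}) :
    (BaireMeasurableSet I' ↔ IsMeagre I') ∧
    (IsMeagre I' ↔ ∃ k : ℕ → ℕ, StrictMono k ∧ k 0 = 0 ∧
      ∀ X ∈ I, {n : ℕ | Set.Ico (k n) (k (n + 1)) ⊆ X}.Finite) := by
  refine ⟨⟨fun h => TalagrandAux.bp_meagre I hdown hunion hfin hproper I' hI' h,
           fun h => h.baireMeasurableSet⟩, ?_, ?_⟩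
  · exact fun h => TalagrandAux.meagre_part I hdown I' hI' h
  · rintro ⟨k, hk, hk0, h⟩
    exact TalagrandAux.part_meagre I I' hI' k hk h
end

section
/- There exists a good family {S^n_m : n,m ∈ ω} of clopen subsets of 2^ω such that for every n and every X ∈ [ω]^{≤2^n}, the intersection ⋂_{j∈X} S^n_j is nonempty. -/
/-!
Call `S` dense between levels `a ≤ b` if every cylinder of length `a` contains a cylinder of
length `b` inside `S`, and say `S` has a dense ladder of height `k` above `c` if this holds for
successive levels `c = l₀ ≤ l₁ ≤ ⋯ ≤ lₖ`. By compactness every open dense set contains a clopen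
set with a ladder of any height above any level. Any `k` sets with ladders of height `k` above a
common level meet: always follow the set whose next rung ends lowest; every other set loses at
most the one rung that this step crosses. So `S^n` can enumerate the (countably many) clopen
sets with a ladder of height `2^n` above the length of a cylinder inside `U n`.
-/

open PiNat TopologicalSpace

namespace GoodFamily

variable {E : ℕ → Type*}

def IsDenseBetween (S : Set (∀ n, E n)) (a b : ℕ) : Prop :=
  ∀ x, ∃ y ∈ cylinder x a, cylinder y b ⊆ S

def HasDenseLadder (S : Set (∀ n, E n)) : ℕ → ℕ → Prop
  | 0, _ => True
  | k + 1, c => ∃ b, c ≤ b ∧ IsDenseBetween S c b ∧ HasDenseLadder S k b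

def cylinderInterior (V : Set (∀ n, E n)) (L : ℕ) : Set (∀ n, E n) := {x | cylinder x L ⊆ V}

section Combinatorics

variable {S V : Set (∀ n, E n)}

theorem IsDenseBetween.anti_left {a a' b : ℕ} (h : IsDenseBetween S a b) (ha : a' ≤ a) :
    IsDenseBetween S a' b := fun x =>
  let ⟨y, hyx, hyS⟩ := h x
  ⟨y, cylinder_anti x ha hyx, hyS⟩

theorem IsDenseBetween.cylinderInterior {a b L : ℕ} (h : IsDenseBetween V a b) (hbL : b ≤ L) :
    IsDenseBetween (cylinderInterior V L) a b := fun x =>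
  let ⟨y, hyx, hyV⟩ := h x
  ⟨y, hyx, fun z hz => (cylinder_anti z hbL).trans ((mem_cylinder_iff_eq.1 hz).symm ▸ hyV)⟩

theorem HasDenseLadder.anti {k c c' : ℕ} (h : HasDenseLadder S k c) (hc : c' ≤ c) :
    HasDenseLadder S k c' := by
  cases k with
  | zero => trivial
  | succ k =>
    obtain ⟨b, hcb, hdense, hrest⟩ := h
    exact ⟨b, hc.trans hcb, hdense.anti_left hc, hrest⟩

theorem HasDenseLadder.inter_cylinder_nonempty {k c : ℕ} (h : HasDenseLadder S k c)
    (hk : 0 < k) (x : ∀ n, E n) : (S ∩ cylinder x c).Nonempty := by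
  obtain ⟨k, rfl⟩ := Nat.exists_eq_succ_of_ne_zero hk.ne'
  obtain ⟨b, -, hdense, -⟩ := h
  obtain ⟨y, hyx, hyS⟩ := hdense x
  exact ⟨y, hyS (self_mem_cylinder y b), hyx⟩

theorem exists_mem_cylinder_forall_mem_of_hasDenseLadder {ι : Type*} (S : ι → Set (∀ n, E n))
    (k : ℕ) (s : Finset ι) (c : ℕ) (x : ∀ n, E n) (hs : s.card ≤ k)
    (hS : ∀ j ∈ s, HasDenseLadder (S j) k c) : ∃ z ∈ cylinder x c, ∀ j ∈ s, z ∈ S j := by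
  classical
  induction k generalizing s c x with
  | zero =>
    rw [Finset.card_eq_zero.1 (Nat.le_zero.1 hs)]
    exact ⟨x, self_mem_cylinder x c, by simp⟩
  | succ k ih =>
    rcases s.eq_empty_or_nonempty with rfl | hne
    · exact ⟨x, self_mem_cylinder x c, by simp⟩
    choose! b hcb hdense hrest using hS
    obtain ⟨j₀, hj₀, hmin⟩ := s.exists_min_image b hne
    obtain ⟨y, hyx, hyS⟩ := hdense j₀ hj₀ x
    obtain ⟨z, hzy, hz⟩ := ih (s.erase j₀) (b j₀) y
      (by rw [Finset.card_erase_of_mem hj₀]; omega)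
      fun j hj => (hrest j (Finset.mem_of_mem_erase hj)).anti (hmin j (Finset.mem_of_mem_erase hj))
    refine ⟨z, ?_, fun j hj => ?_⟩
    · rw [← mem_cylinder_iff_eq.1 hyx]
      exact cylinder_anti y (hcb j₀ hj₀) hzy
    · by_cases hj₀' : j = j₀
      · exact hj₀' ▸ hyS hzy
      · exact hz j (Finset.mem_erase.2 ⟨hj₀', hj⟩)

end Combinatorics

section Topology

variable [∀ n, TopologicalSpace (E n)] [∀ n, DiscreteTopology (E n)] {V : Set (∀ n, E n)}

theorem isClopen_cylinderInterior (V : Set (∀ n, E n)) (L : ℕ) :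
    IsClopen (cylinderInterior V L) := by
  refine ⟨isOpen_compl_iff.1 ?_, ?_⟩ <;>
  refine isOpen_iff_forall_mem_open.2 fun x hx =>
    ⟨cylinder x L, fun y hy => ?_, isOpen_cylinder E x L, self_mem_cylinder x L⟩ <;>
  simpa [cylinderInterior, mem_cylinder_iff_eq.1 hy] using hx

theorem exists_isDenseBetween [CompactSpace (∀ n, E n)] (hVo : IsOpen V) (hVd : Dense V)
    (a : ℕ) : ∃ b, a ≤ b ∧ IsDenseBetween V a b := by
  let A : ℕ → Set (∀ n, E n) := fun b => {x | ∃ y ∈ cylinder x a, cylinder y b ⊆ V}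
  have hAo : ∀ b, IsOpen (A b) := fun b => isOpen_iff_forall_mem_open.2 fun x ⟨y, hyx, hyV⟩ =>
    ⟨cylinder x a, fun x' hx' => ⟨y, (mem_cylinder_iff_eq.1 hx').symm ▸ hyx, hyV⟩,
      isOpen_cylinder E x a, self_mem_cylinder x a⟩
  have hAmono : Monotone A := fun b b' hbb' x ⟨y, hyx, hyV⟩ =>
    ⟨y, hyx, (cylinder_anti y hbb').trans hyV⟩
  have hAcover : Set.univ ⊆ ⋃ b, A b := by
    intro x _
    obtain ⟨y, hyx, hyV⟩ := hVd.inter_open_nonempty _ (isOpen_cylinder E x a)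
      ⟨x, self_mem_cylinder x a⟩
    obtain ⟨_, ⟨y', b, rfl⟩, hyy', hsub⟩ :=
      (isTopologicalBasis_cylinders E).exists_subset_of_mem_open hyV hVo
    exact Set.mem_iUnion.2 ⟨b, y, hyx, (mem_cylinder_iff_eq.1 hyy').symm ▸ hsub⟩
  obtain ⟨b, hb⟩ := isCompact_univ.elim_directed_cover A hAo hAcover hAmono.directed_le
  exact ⟨max a b, le_max_left a b, fun x => hAmono (le_max_right a b) (hb (Set.mem_univ x))⟩

theorem exists_isClopen_subset_hasDenseLadder [CompactSpace (∀ n, E n)] (hVo : IsOpen V)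
    (hVd : Dense V) (k c : ℕ) : ∃ S, IsClopen S ∧ S ⊆ V ∧ HasDenseLadder S k c := by
  suffices h : ∀ k c, ∃ L, ∀ L' ≥ L, HasDenseLadder (cylinderInterior V L') k c by
    obtain ⟨L, hL⟩ := h k c
    exact ⟨_, isClopen_cylinderInterior V L, fun x hx => hx (self_mem_cylinder x L),
      hL L le_rfl⟩
  intro k
  induction k with
  | zero => exact fun _ => ⟨0, fun _ _ => trivial⟩
  | succ k ih =>
    intro c
    obtain ⟨b, hcb, hdense⟩ := exists_isDenseBetween hVo hVd c
    obtain ⟨L, hL⟩ := ih b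
    exact ⟨max L b, fun L' hL' =>
      ⟨b, hcb, hdense.cylinderInterior (le_of_max_le_right hL'), hL L' (le_of_max_le_left hL')⟩⟩

end Topology

end GoodFamily

open GoodFamily in
/-- There exists a good family `{S^n_m}` of clopen subsets of Cantor space `2^ω`
(with respect to a given basis `{U n}` of nonempty open sets): every `S^n_m` meets
`U n`, every open dense set contains some `S^n_m` for each `n`, and moreover any
at most `2^n` of the sets `S^n_j` have nonempty intersection. -/
theorem exists_good_family_with_intersections
    (U : ℕ → Set (ℕ → Bool))
    (hU : TopologicalSpace.IsTopologicalBasis (Set.range U))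
    (hUne : ∀ n, (U n).Nonempty) :
    ∃ S : ℕ → ℕ → Set (ℕ → Bool),
      (∀ n m, IsClopen (S n m)) ∧
      (∀ n m, (S n m ∩ U n).Nonempty) ∧
      (∀ V : Set (ℕ → Bool), IsOpen V → Dense V → ∀ n, ∃ m, S n m ⊆ V) ∧
      (∀ (n : ℕ) (X : Finset ℕ), X.card ≤ 2 ^ n → (⋂ j ∈ X, S n j).Nonempty) := by
  have hcyl : ∀ n, ∃ y c, cylinder y c ⊆ U n := fun n => by
    obtain ⟨x, hx⟩ := hUne n
    obtain ⟨_, ⟨y, c, rfl⟩, -, hsub⟩ :=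
      (isTopologicalBasis_cylinders _).exists_subset_of_mem_open hx (hU.isOpen ⟨n, rfl⟩)
    exact ⟨y, c, hsub⟩
  choose y c hyc using hcyl
  let G n := {S : Set (ℕ → Bool) | IsClopen S ∧ HasDenseLadder S (2 ^ n) (c n)}
  have : Countable (Clopens (ℕ → Bool)) := Clopens.countable_iff_secondCountable.2 inferInstance
  have hGc : ∀ n, (G n).Countable := fun n =>
    (Set.countable_range ((↑) : Clopens (ℕ → Bool) → Set (ℕ → Bool))).mono
      fun S hS => Set.mem_range.2 ⟨⟨S, hS.1⟩, rfl⟩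
  have hGne : ∀ n, (G n).Nonempty := fun n => by
    obtain ⟨S, hS, -, hSl⟩ :=
      exists_isClopen_subset_hasDenseLadder (isOpen_univ (X := ℕ → Bool)) dense_univ (2 ^ n) (c n)
    exact ⟨S, hS, hSl⟩
  choose S hS using fun n => (hGc n).exists_eq_range (hGne n)
  have hSG : ∀ n m, S n m ∈ G n := fun n m => (hS n).symm ▸ ⟨m, rfl⟩
  refine ⟨S, fun n m => (hSG n m).1, fun n m => ?_, fun V hVo hVd n => ?_, fun n X hX => ?_⟩
  · exact ((hSG n m).2.inter_cylinder_nonempty (Nat.two_pow_pos n) (y n)).mono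
      (Set.inter_subset_inter_right _ (hyc n))
  · obtain ⟨T, hT, hTV, hTl⟩ := exists_isClopen_subset_hasDenseLadder hVo hVd (2 ^ n) (c n)
    obtain ⟨m, hm⟩ : T ∈ Set.range (S n) := hS n ▸ ⟨hT, hTl⟩
    exact ⟨m, hm ▸ hTV⟩
  · obtain ⟨z, -, hz⟩ := exists_mem_cylinder_forall_mem_of_hasDenseLadder (S n) (2 ^ n) X (c n)
      (y n) hX fun j _ => (hSG n j).2
    exact ⟨z, Set.mem_iInter₂.2 hz⟩
end

section
/- If X ⊆ ω^ω (viewed as the irrationals) is such that for every Borel function x ↦ f^x ∈ ω^ω there exists g ∈ ω^ω with ∀x ∈ X ∃^∞ n (f^x(n) = g(n)), then for any Borel assignment x ↦ (Y^x, f^x) ∈ [ω]^ω × ω^ω there exists g ∈ ω^ω such that for every x ∈ X there are infinitely many n ∈ Y^x with f^x(n) = g(n). -/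
/-!
Code the claims `(y x i, f x (y x i))` for `i` in the block `[2^k - 1, 2^(k+1) - 1)` into the
single number `(H x) k`; `H` is Borel, so niceness gives `g'` with `g' k = H x k` for
infinitely many `k`. Decoding `g'` yields one sequence of claims `(position, value)`, and `g`
takes at each position the value of the first claim about it. A correctly guessed block has
`2^k` claims at distinct positions but is preceded by only `2^k - 1` claims, so one of its
claims is the first at its position, and `g` agrees there with `f x` at a point of `Y^x`.
-/

open Finset Encodable

noncomputable def firstClaimValue (c : ℕ → ℕ × ℕ) (m : ℕ) : ℕ :=
  (c (sInf {i | (c i).1 = m})).2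

lemma firstClaimValue_eq {c : ℕ → ℕ × ℕ} {i : ℕ} (hi : ∀ j < i, (c j).1 ≠ (c i).1) :
    firstClaimValue c (c i).1 = (c i).2 := by
  have hmin : sInf {j | (c j).1 = (c i).1} = i :=
    le_antisymm (Nat.sInf_le rfl) (le_csInf ⟨i, rfl⟩ fun j hj => not_lt.1 fun hji => hi j hji hj)
  rw [firstClaimValue, hmin]

lemma exists_firstClaimValue_eq {c p : ℕ → ℕ × ℕ} {s t : ℕ} (hst : s < t - s)
    (hinj : Set.InjOn (fun i => (p i).1) (Ico s t)) (hcp : Set.EqOn c p (Ico s t)) :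
    ∃ i ∈ Ico s t, firstClaimValue c (p i).1 = (p i).2 := by
  have hcard : ((range s).image fun j => (c j).1).card < ((Ico s t).image fun i => (p i).1).card := by
    rw [card_image_of_injOn hinj, Nat.card_Ico]
    exact card_image_le.trans_lt (by simpa using hst)
  obtain ⟨_, hnew, hfresh⟩ := exists_mem_notMem_of_card_lt_card hcard
  obtain ⟨i, hi, rfl⟩ := mem_image.1 hnew
  refine ⟨i, hi, ?_⟩
  rw [← hcp hi]
  refine firstClaimValue_eq fun j hji hj => ?_
  rw [hcp hi] at hj
  by_cases hjs : j < s
  · exact hfresh (mem_image.2 ⟨j, mem_range.2 hjs, hj⟩)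
  · have hjblock : j ∈ Ico s t := mem_Ico.2 ⟨not_lt.1 hjs, hji.trans (mem_Ico.1 hi).2⟩
    rw [hcp hjblock] at hj
    exact hji.ne (hinj hjblock hi hj)

/-- Block `k` of a claim sequence `p` (the claims with index in `[2^k - 1, 2^(k+1) - 1)`),
coded as a natural number. -/
def blockCode (p : ℕ → ℕ × ℕ) (k : ℕ) : ℕ :=
  encode (List.ofFn fun t : Fin (2 ^ k) => p (2 ^ k - 1 + t))

/-- The claim sequence whose `k`-th block is decoded from `g k`; undecodable entries are `(0, 0)`. -/
def claimsOfCodes (g : ℕ → ℕ) (i : ℕ) : ℕ × ℕ :=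
  let k := Nat.log 2 (i + 1)
  ((decode (g k) : Option (List (ℕ × ℕ))).getD []).getD (i + 1 - 2 ^ k) (0, 0)

lemma claimsOfCodes_of_eq_blockCode {g : ℕ → ℕ} {p : ℕ → ℕ × ℕ} {k i : ℕ}
    (hk : g k = blockCode p k) (hi : i ∈ Ico (2 ^ k - 1) (2 ^ (k + 1) - 1)) :
    claimsOfCodes g i = p i := by
  have hpos : 0 < 2 ^ k := Nat.two_pow_pos k
  obtain ⟨hlo, hhi⟩ := mem_Ico.1 hi
  have hlog : Nat.log 2 (i + 1) = k := Nat.log_eq_of_pow_le_of_lt_pow (by omega) (by omega)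
  have hoff : i + 1 - 2 ^ k < 2 ^ k := by rw [pow_succ] at hhi; omega
  simp only [claimsOfCodes, hlog, hk, blockCode, encodek, Option.getD_some,
    List.getD_eq_getElem?_getD, List.getElem?_ofFn, dif_pos hoff]
  congr 1
  omega

lemma measurable_blockCode {α : Type*} [MeasurableSpace α] {p : α → ℕ → ℕ × ℕ}
    (hp : ∀ i, Measurable fun a => p a i) : Measurable fun a => blockCode (p a) := by
  refine measurable_pi_lambda _ fun k => ?_
  exact (measurable_of_countable fun v : Fin (2 ^ k) → ℕ × ℕ => encode (List.ofFn v)).comp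
    (measurable_pi_lambda _ fun t => hp _)

/-- If `X ⊆ ω^ω` is *nice* — for every Borel `x ↦ f^x ∈ ω^ω` there is a single
`g ∈ ω^ω` agreeing with each `f^x`, `x ∈ X`, infinitely often — then for every Borel
assignment `x ↦ (Y^x, f^x)` of an infinite set `Y^x ⊆ ω` (given by its increasing
enumeration `y x`) together with `f^x ∈ ω^ω`, there is `g ∈ ω^ω` such that for every
`x ∈ X` there are infinitely many `n ∈ Y^x` with `f^x(n) = g(n)`. -/
theorem nice_set_diagonalization (X : Set (ℕ → ℕ))
    (hnice : ∀ F : (ℕ → ℕ) → ℕ → ℕ, Measurable F →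
      ∃ g : ℕ → ℕ, ∀ x ∈ X, {n : ℕ | F x n = g n}.Infinite)
    (y : (ℕ → ℕ) → ℕ → ℕ) (f : (ℕ → ℕ) → ℕ → ℕ)
    (hy : Measurable y) (hf : Measurable f)
    (hymono : ∀ x, StrictMono (y x)) :
    ∃ g : ℕ → ℕ, ∀ x ∈ X,
      {n : ℕ | (∃ k, y x k = n) ∧ f x n = g n}.Infinite := by
  set p : (ℕ → ℕ) → ℕ → ℕ × ℕ := fun x i => (y x i, f x (y x i))
  have heval : Measurable fun q : (ℕ → ℕ) × ℕ => q.1 q.2 :=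
    measurable_from_prod_countable_left fun n => measurable_pi_apply n
  have hp : ∀ i, Measurable fun x => p x i := fun i =>
    hy.eval.prodMk (heval.comp (hf.prodMk hy.eval))
  obtain ⟨g', hg'⟩ := hnice _ (measurable_blockCode hp)
  refine ⟨firstClaimValue (claimsOfCodes g'), fun x hx => ?_⟩
  refine Set.infinite_of_forall_exists_gt fun N => ?_
  obtain ⟨k, hk, hNk⟩ := (hg' x hx).exists_gt N
  have hpos : 0 < 2 ^ k := Nat.two_pow_pos k
  obtain ⟨i, hi, hgi⟩ := exists_firstClaimValue_eq (c := claimsOfCodes g') (p := p x)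
    (by rw [pow_succ]; omega) ((hymono x).injective.injOn)
    fun i hi => claimsOfCodes_of_eq_blockCode hk.symm hi
  refine ⟨y x i, ⟨⟨i, rfl⟩, hgi.symm⟩, ?_⟩
  calc N < k := hNk
    _ ≤ 2 ^ k - 1 := by have := k.lt_two_pow_self; omega
    _ ≤ i := (mem_Ico.1 hi).1
    _ ≤ y x i := (hymono x).le_apply
end
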